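/- arXiv:1908.01218 — 12 statements merged into one kernel-verified Lean document; each statement's English description precedes it below -/
import Mathlib

section
/- Let a be a positive integer and b a real number with 2 ≤ a ≤ b. Then a ≤ 2^{⌈b⌉ − ⌈b/a⌉}. -/
/-! The ceiling loses less than one, so `⌈b⌉ - ⌈b/a⌉ > b - b/a - 1 ≥ a - 2`, where the last step is
`(a - 1)(b - a) ≥ 0`; hence the exponent is at least `a - 1`, and `a ≤ 2 ^ (a - 1)`. -/

lemma div_natCast_le_sub_add_one {n : ℕ} {b : ℝ} (hn : 0 < n) (hnb : (n : ℝ) ≤ b) :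
    b / n ≤ b - n + 1 := by
  have hn' : (1 : ℝ) ≤ n := by exact_mod_cast hn
  rw [div_le_iff₀ (by positivity)]
  nlinarith

lemma natCast_sub_one_le_ceil_sub_ceil_div {n : ℕ} {b : ℝ} (hn : 0 < n) (hnb : (n : ℝ) ≤ b) :
    (n : ℤ) - 1 ≤ ⌈b⌉ - ⌈b / n⌉ := by
  have hlt : (((n : ℤ) - 2 : ℤ) : ℝ) < ((⌈b⌉ - ⌈b / n⌉ : ℤ) : ℝ) := by
    push_cast
    linarith [Int.le_ceil b, Int.ceil_lt_add_one (b / n), div_natCast_le_sub_add_one hn hnb]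
  have := Int.cast_lt.mp hlt
  omega

lemma natCast_le_two_zpow_sub_one (n : ℕ) : (n : ℝ) ≤ 2 ^ ((n : ℤ) - 1) := by
  cases n with
  | zero => simp
  | succ m =>
    rw [Nat.cast_succ, Nat.cast_succ, add_sub_cancel_right, zpow_natCast]
    exact_mod_cast Nat.lt_two_pow_self

/-- Lemma 4.4 (inequality part): for a positive integer `a` and a real `b` with
`2 ≤ a ≤ b`, one has `a ≤ 2 ^ (⌈b⌉ - ⌈b/a⌉)`. -/
theorem stmt_0 (a : ℕ) (b : ℝ) (ha : 2 ≤ a) (hab : (a : ℝ) ≤ b) :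
    (a : ℝ) ≤ (2 : ℝ) ^ (⌈b⌉ - ⌈b / (a : ℝ)⌉) :=
  (natCast_le_two_zpow_sub_one a).trans <|
    zpow_le_zpow_right₀ one_le_two (natCast_sub_one_le_ceil_sub_ceil_div (by omega) hab)
end

section
/- Let a be a positive integer and b a real number with 2 ≤ a ≤ b. Then a = 2^{⌈b⌉ − ⌈b/a⌉} holds if and only if a = 2 and ⌈b⌉ − ⌈b/a⌉ = 1. -/
/-!
Write `k = ⌈b⌉ - ⌈b/a⌉`. Since `b - b/a = b(a-1)/a ≥ a - 1` and the two ceilings move `b` and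
`b/a` by less than one in opposite directions, `k > a - 2`, i.e. `k ≥ a - 1`. Hence
`a = 2^k` forces `2^k ≤ k + 1`, which only happens for `k ≤ 1`, so `k = 1` and `a = 2`.
-/

lemma Nat.le_one_of_two_pow_le_succ {n : ℕ} (h : 2 ^ n ≤ n + 1) : n ≤ 1 := by
  cases n with
  | zero => omega
  | succ m =>
    have hm : m < 2 ^ m := Nat.lt_two_pow_self
    rw [pow_succ] at h
    omega

section

variable {K : Type*} [Field K] [LinearOrder K] [IsStrictOrderedRing K]

lemma sub_one_le_sub_div_self {a b : K} (ha : 1 ≤ a) (hab : a ≤ b) : a - 1 ≤ b - b / a := by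
  have ha0 : 0 < a := by linarith
  have hdiff : b - b / a - (a - 1) = (b - a) * (a - 1) / a := by
    field_simp
  have : 0 ≤ (b - a) * (a - 1) / a :=
    div_nonneg (mul_nonneg (sub_nonneg.2 hab) (sub_nonneg.2 ha)) ha0.le
  linarith

lemma Nat.sub_one_le_ceil_sub_ceil_div [FloorRing K] {a : ℕ} {b : K} (ha : 1 ≤ a)
    (hab : (a : K) ≤ b) : (a : ℤ) - 1 ≤ ⌈b⌉ - ⌈b / a⌉ := by
  have hgap := sub_one_le_sub_div_self (by exact_mod_cast ha) hab
  have hb := Int.le_ceil b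
  have hba := Int.ceil_lt_add_one (b / a)
  have hlt : ((a : ℤ) - 2 : K) < ((⌈b⌉ - ⌈b / a⌉ : ℤ) : K) := by
    push_cast
    linarith
  have : (a : ℤ) - 2 < ⌈b⌉ - ⌈b / a⌉ := by exact_mod_cast hlt
  omega

lemma Nat.cast_eq_two_zpow_iff {a : ℕ} {k : ℤ} (ha : 2 ≤ a) (hk : (a : ℤ) - 1 ≤ k) :
    (a : K) = 2 ^ k ↔ a = 2 ∧ k = 1 := by
  constructor
  · intro h
    lift k to ℕ using (by omega)
    have han : a = 2 ^ k := by exact_mod_cast h.trans (zpow_natCast 2 k)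
    have hk1 : k ≤ 1 := Nat.le_one_of_two_pow_le_succ (by omega)
    interval_cases k <;> omega
  · rintro ⟨rfl, rfl⟩
    norm_num

end

/-- Lemma 4.4 (equality characterization): for a positive integer `a` and a real `b`
with `2 ≤ a ≤ b`, one has `a = 2 ^ (⌈b⌉ - ⌈b/a⌉)` if and only if `a = 2` and
`⌈b⌉ - ⌈b/a⌉ = 1`. -/
theorem stmt_1 (a : ℕ) (b : ℝ) (ha : 2 ≤ a) (hab : (a : ℝ) ≤ b) :
    (a : ℝ) = (2 : ℝ) ^ (⌈b⌉ - ⌈b / (a : ℝ)⌉) ↔ a = 2 ∧ ⌈b⌉ - ⌈b / (a : ℝ)⌉ = 1 :=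
  Nat.cast_eq_two_zpow_iff ha (Nat.sub_one_le_ceil_sub_ceil_div (by omega) hab)
end

section
/- Let n ≥ 1 and let x₁,…,xₙ and c₁,…,cₙ be positive real numbers. Then equality (x₁/c₁)^{x₁} ⋯ (xₙ/cₙ)^{xₙ} = ((x₁+⋯+xₙ)/(c₁+⋯+cₙ))^{x₁+⋯+xₙ} holds if and only if x₁/c₁ = x₂/c₂ = ⋯ = xₙ/cₙ. -/
/-!
Taking logarithms, the identity becomes `∑ xᵢ log (xᵢ/cᵢ) = X log (X/C)` with `X = ∑ xᵢ`,
`C = ∑ cᵢ`. Dividing by `C`, this is the equality case of Jensen's inequality for the strictly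
convex function `t ↦ t log t` at the points `xᵢ/cᵢ` with weights `cᵢ/C`, which holds exactly when
all the points coincide.
-/

open Finset Real

namespace Real

theorem div_rpow_self_eq_exp {x c : ℝ} (hx : 0 ≤ x) (hc : 0 ≤ c) (hcx : c = 0 → x = 0) :
    (x / c) ^ x = exp (x * log (x / c)) := by
  rcases hx.eq_or_lt with rfl | hx
  · simp
  · have hc : 0 < c := hc.lt_of_ne fun h => hx.ne' (hcx h.symm)
    rw [rpow_def_of_pos (div_pos hx hc), mul_comm]

variable {ι : Type*} {s : Finset ι} {x c : ι → ℝ}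

theorem prod_div_rpow_eq_iff_sum_mul_log_div_eq (hx : ∀ i ∈ s, 0 ≤ x i)
    (hc : ∀ i ∈ s, 0 < c i) :
    ∏ i ∈ s, (x i / c i) ^ x i = ((∑ i ∈ s, x i) / ∑ i ∈ s, c i) ^ ∑ i ∈ s, x i ↔
      ∑ i ∈ s, x i * log (x i / c i) =
        (∑ i ∈ s, x i) * log ((∑ i ∈ s, x i) / ∑ i ∈ s, c i) := by
  rcases s.eq_empty_or_nonempty with rfl | hs
  · simp
  have hC : ∑ i ∈ s, c i ≠ 0 := (sum_pos hc hs).ne'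
  rw [prod_congr rfl fun i hi => div_rpow_self_eq_exp (hx i hi) (hc i hi).le
      fun h => absurd h (hc i hi).ne', ← exp_sum,
    div_rpow_self_eq_exp (sum_nonneg hx) (sum_nonneg fun i hi => (hc i hi).le)
      fun h => absurd h hC, exp_eq_exp]

/-- Equality case of the log-sum inequality. -/
theorem sum_mul_log_div_eq_iff (hx : ∀ i ∈ s, 0 ≤ x i) (hc : ∀ i ∈ s, 0 < c i) :
    ∑ i ∈ s, x i * log (x i / c i) =
        (∑ i ∈ s, x i) * log ((∑ i ∈ s, x i) / ∑ i ∈ s, c i) ↔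
      ∀ i ∈ s, ∀ j ∈ s, x i / c i = x j / c j := by
  rcases s.eq_empty_or_nonempty with rfl | hs
  · simp
  set C := ∑ i ∈ s, c i
  have hC : 0 < C := sum_pos hc hs
  have hJensen := strictConvexOn_mul_log.map_sum_eq_iff_of_pos (t := s) (w := fun i => c i / C)
    (p := fun i => x i / c i) (fun i hi => div_pos (hc i hi) hC)
    (by rw [← sum_div, div_self hC.ne'])
    fun i hi => Set.mem_Ici.2 (div_nonneg (hx i hi) (hc i hi).le)
  have hmean : ∑ i ∈ s, (c i / C) • (x i / c i) = (∑ i ∈ s, x i) / C := by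
    rw [sum_div]
    exact sum_congr rfl fun i hi => by rw [smul_eq_mul]; field_simp [(hc i hi).ne']
  have hweighted : ∑ i ∈ s, (c i / C) • (x i / c i * log (x i / c i)) =
      (∑ i ∈ s, x i * log (x i / c i)) / C := by
    rw [sum_div]
    exact sum_congr rfl fun i hi => by rw [smul_eq_mul]; field_simp [(hc i hi).ne']
  simp only [hmean, hweighted] at hJensen
  rw [← hJensen, div_mul_eq_mul_div, div_left_inj' hC.ne', eq_comm]

end Real

theorem stmt_4_general (n : ℕ) (x c : Fin n → ℝ)
    (hx : ∀ i, 0 < x i) (hc : ∀ i, 0 < c i) :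
    (∏ i, (x i / c i) ^ (x i)) = ((∑ i, x i) / (∑ i, c i)) ^ (∑ i, x i) ↔
      ∀ i j, x i / c i = x j / c j := by
  have hx₀ : ∀ i ∈ univ, 0 ≤ x i := fun i _ => (hx i).le
  have hc₀ : ∀ i ∈ univ, 0 < c i := fun i _ => hc i
  rw [prod_div_rpow_eq_iff_sum_mul_log_div_eq hx₀ hc₀, sum_mul_log_div_eq_iff hx₀ hc₀]
  simp only [mem_univ, forall_const]

/-- Lemma 5.3 (equality characterization): for positive reals `x₁,…,xₙ` and `c₁,…,cₙ`,
equality `(x₁/c₁)^{x₁} ⋯ (xₙ/cₙ)^{xₙ} = ((x₁+⋯+xₙ)/(c₁+⋯+cₙ))^{x₁+⋯+xₙ}` holds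
if and only if `x₁/c₁ = ⋯ = xₙ/cₙ`, where powers are real powers. -/
theorem stmt_4 (n : ℕ) (hn : 1 ≤ n) (x c : Fin n → ℝ)
    (hx : ∀ i, 0 < x i) (hc : ∀ i, 0 < c i) :
    (∏ i, (x i / c i) ^ (x i)) = ((∑ i, x i) / (∑ i, c i)) ^ (∑ i, x i) ↔
      ∀ i j, x i / c i = x j / c j :=
  stmt_4_general n x c hx hc
end

section
/- Let n ≥ 1 and let D be a set of non-empty subsets of {1,…,n} such that (1) {i} ∈ D for every i ∈ {1,…,n} and (2) any two members of D are either nested or disjoint. For J ∈ D with |J| ≥ 2 let δ(J) = #{J' ∈ D : J' ⋖ J}, where J' ⋖ J means J' ⊊ J and there is no K ∈ D with J' ⊊ K ⊊ J, and set m(D) = ∏_{J ∈ D, |J| ≥ 2} δ(J). Then m(D) ≤ 2^{n−1}. -/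
/-!
Each `J ∈ D` is the parent of exactly `δ(J)` members of `D`, every member of `D` has at most one
parent by laminarity, and a member of maximal size has none; hence `∑ δ(J) ≤ |D| - 1`. The members
of size `< 2` are exactly the `n` singletons, so over the `|D| - n` members of size `≥ 2` the excesses
`δ(J) - 1` add up to at most `n - 1`, and `k ≤ 2^(k-1)` turns this into the bound on the product.
-/

open Finset
open scoped Classical

/-- `J' ⋖ J` in `D`: `J' ⊊ J` and there is no `K ∈ D` with `J' ⊊ K ⊊ J`. -/
def CoversIn {n : ℕ} (D : Finset (Finset (Fin n))) (J' J : Finset (Fin n)) : Prop :=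
  J' ⊂ J ∧ ¬ ∃ K ∈ D, J' ⊂ K ∧ K ⊂ J

/-- `δ(J)`: the number of `J' ∈ D` covered by `J`. -/
noncomputable def delta {n : ℕ} (D : Finset (Finset (Fin n))) (J : Finset (Fin n)) : ℕ :=
  (D.filter (fun J' => CoversIn D J' J)).card

/-- `m(D) = ∏_{J ∈ D, |J| ≥ 2} δ(J)`. -/
noncomputable def mInv {n : ℕ} (D : Finset (Finset (Fin n))) : ℕ :=
  ∏ J ∈ D.filter (fun J => 2 ≤ J.card), delta D J

theorem Nat.le_two_pow_pred (k : ℕ) : k ≤ 2 ^ (k - 1) := by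
  cases k with
  | zero => simp
  | succ m => simpa using Nat.lt_two_pow_self (n := m)

theorem Finset.prod_le_two_pow_sum_sub_card {ι : Type*} (s : Finset ι) (f : ι → ℕ) :
    ∏ i ∈ s, f i ≤ 2 ^ (∑ i ∈ s, f i - #s) := by
  by_cases hzero : ∃ i ∈ s, f i = 0
  · obtain ⟨i, hi, hfi⟩ := hzero
    simp [prod_eq_zero hi hfi]
  push Not at hzero
  have hpos : ∀ i ∈ s, 1 ≤ f i := fun i hi => Nat.one_le_iff_ne_zero.mpr (hzero i hi)
  calc ∏ i ∈ s, f i ≤ ∏ i ∈ s, 2 ^ (f i - 1) := prod_le_prod' fun i _ => Nat.le_two_pow_pred _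
    _ = 2 ^ (∑ i ∈ s, f i - #s) := by
      rw [prod_pow_eq_pow_sum, sum_tsub_distrib s hpos, sum_const, smul_eq_mul, mul_one]

section LaminarFamily

variable {n : ℕ} (D : Finset (Finset (Fin n)))

noncomputable def children (J : Finset (Fin n)) : Finset (Finset (Fin n)) :=
  D.filter (fun J' => CoversIn D J' J)

variable {D}

theorem pairwiseDisjoint_children (hne : ∀ J ∈ D, J.Nonempty)
    (hlaminar : ∀ J ∈ D, ∀ J' ∈ D, J ⊆ J' ∨ J' ⊆ J ∨ J ∩ J' = ∅) :
    (D : Set (Finset (Fin n))).PairwiseDisjoint (children D) := by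
  intro J hJ K hK hJK
  rw [Function.onFun, disjoint_left]
  intro A hAJ hAK
  obtain ⟨hAD, hAJ, hnoJ⟩ := mem_filter.mp hAJ
  obtain ⟨-, hAK, hnoK⟩ := mem_filter.mp hAK
  rcases hlaminar J hJ K hK with hsub | hsub | hdisj
  · exact hnoK ⟨J, hJ, hAJ, lt_of_le_of_ne hsub hJK⟩
  · exact hnoJ ⟨K, hK, hAK, lt_of_le_of_ne hsub hJK.symm⟩
  · obtain ⟨a, ha⟩ := hne A hAD
    simpa [hdisj] using mem_inter.mpr ⟨hAJ.1 ha, hAK.1 ha⟩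

theorem sum_delta_le_card_sub_one (hne : ∀ J ∈ D, J.Nonempty)
    (hlaminar : ∀ J ∈ D, ∀ J' ∈ D, J ⊆ J' ∨ J' ⊆ J ∨ J ∩ J' = ∅) :
    ∑ J ∈ D, delta D J ≤ #D - 1 := by
  rcases D.eq_empty_or_nonempty with rfl | hD
  · simp
  obtain ⟨M, hMD, hMmax⟩ := D.exists_max_image card hD
  have hunion : D.biUnion (children D) ⊆ D.erase M := by
    intro A hA
    obtain ⟨J, hJD, hAJ⟩ := mem_biUnion.mp hA
    obtain ⟨hAD, hcov⟩ := mem_filter.mp hAJ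
    refine mem_erase.mpr ⟨?_, hAD⟩
    rintro rfl
    exact absurd (hMmax J hJD) (not_le.mpr (card_lt_card hcov.1))
  calc ∑ J ∈ D, delta D J = #(D.biUnion (children D)) :=
        (card_biUnion (pairwiseDisjoint_children hne hlaminar)).symm
    _ ≤ #(D.erase M) := card_le_card hunion
    _ = #D - 1 := card_erase_of_mem hMD

theorem card_eq_card_filter_two_le_add (hne : ∀ J ∈ D, J.Nonempty)
    (hsingle : ∀ i : Fin n, {i} ∈ D) :
    #D = #(D.filter (fun J => 2 ≤ #J)) + n := by
  have hsmall : D.filter (fun J => ¬ 2 ≤ #J) = univ.map ⟨singleton, singleton_injective⟩ := by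
    ext A
    simp only [mem_filter, mem_map, mem_univ, true_and, Function.Embedding.coeFn_mk]
    constructor
    · rintro ⟨hAD, hcard⟩
      have hone : #A = 1 := by have := (hne A hAD).card_pos; omega
      obtain ⟨i, rfl⟩ := card_eq_one.mp hone
      exact ⟨i, rfl⟩
    · rintro ⟨i, rfl⟩
      exact ⟨hsingle i, by simp⟩
  rw [← card_filter_add_card_filter_not (s := D) (fun J => 2 ≤ #J), hsmall, card_map,
    card_univ, Fintype.card_fin]

end LaminarFamily

theorem stmt_6_general (n : ℕ) (D : Finset (Finset (Fin n)))
    (hne : ∀ J ∈ D, J.Nonempty)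
    (hsingle : ∀ i : Fin n, {i} ∈ D)
    (hlaminar : ∀ J ∈ D, ∀ J' ∈ D, J ⊆ J' ∨ J' ⊆ J ∨ J ∩ J' = ∅) :
    mInv D ≤ 2 ^ (n - 1) := by
  set S := D.filter (fun J => 2 ≤ #J)
  have hsumS : ∑ J ∈ S, delta D J ≤ #S + n - 1 :=
    calc ∑ J ∈ S, delta D J ≤ ∑ J ∈ D, delta D J := sum_le_sum_of_subset (filter_subset _ _)
      _ ≤ #D - 1 := sum_delta_le_card_sub_one hne hlaminar
      _ = #S + n - 1 := by rw [card_eq_card_filter_two_le_add hne hsingle]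
  calc mInv D ≤ 2 ^ (∑ J ∈ S, delta D J - #S) := prod_le_two_pow_sum_sub_card S _
    _ ≤ 2 ^ (n - 1) := Nat.pow_le_pow_right two_pos (by omega)

/-- The combinatorial part of Theorem 4.2 (Watanabe's bound): for a laminar family `D`
on `{1,…,n}` containing all singletons, `m(D) ≤ 2^{n−1}`. -/
theorem stmt_6 (n : ℕ) (hn : 1 ≤ n) (D : Finset (Finset (Fin n)))
    (hne : ∀ J ∈ D, J.Nonempty)
    (hsingle : ∀ i : Fin n, {i} ∈ D)
    (hlaminar : ∀ J ∈ D, ∀ J' ∈ D, J ⊆ J' ∨ J' ⊆ J ∨ J ∩ J' = ∅) :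
    mInv D ≤ 2 ^ (n - 1) :=
  stmt_6_general n D hne hsingle hlaminar
end

section
/- Let 𝔻 = (D, w) be an n-dimensional connected special datum with unique maximal element J, and let a be a positive integer. Define w^a : D → ℕ₊ by w^a(J) = 1 and w^a(J') = a·w(J') for J' ∈ D with J' ≠ J. Then 𝔻^a = (D, w^a) is an n-dimensional special datum and the order of the finite group G_{𝔻^a} satisfies |G_{𝔻^a}| = a^{n−1}·|G_𝔻|. -/
/-!
Realise `G_𝔻` inside the torus `T = {t ∈ (ℂˣ)ⁿ | ∏ tᵢ = 1}` of diagonal matrices, where the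
generator `(ζ, ζ⁻¹; i, j)` becomes `pairVec ζ i j`. Since `T` is commutative, the `a`-th power map
is a homomorphism, and it sends `G_{𝔻^a}` onto `G_𝔻`: a primitive `a·w(J₁)`-th root of unity goes
to a primitive `w(J₁)`-th root, and every primitive `w(J₁)`-th root is the `a`-th power of a power
of a primitive `a·w(J₁)`-th root. Its kernel on `G_{𝔻^a}` is all of `T[a]`, of order `aⁿ⁻¹`:
an `a`-torsion point of `T` is the product of the `pairVec tₖ k l` for `k ≠ l`, and any two distinct
`k, l` lie in children `J₁, J₂` of the root, whose new weight `a·w(J₁)` is a multiple of `a`.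
-/

open Finset

/-- An `n`-dimensional special datum (Watanabe): a laminar family `D` of non-empty
subsets of `{1,…,n}` containing all singletons, with weights `w : D → ℕ₊` that are `1`
on maximal elements, strictly increase and divide along reverse inclusion, and agree on
elements covered by a common element. -/
structure IsSpecialDatum {n : ℕ} (D : Finset (Finset (Fin n))) (w : Finset (Fin n) → ℕ) : Prop where
  nonempty_mem : ∀ J ∈ D, J.Nonempty
  singleton_mem : ∀ i : Fin n, {i} ∈ D
  laminar : ∀ J ∈ D, ∀ J' ∈ D, J ⊆ J' ∨ J' ⊆ J ∨ J ∩ J' = ∅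
  w_pos : ∀ J ∈ D, 0 < w J
  w_max : ∀ J ∈ D, (∀ K ∈ D, J ⊆ K → J = K) → w J = 1
  w_lt : ∀ J ∈ D, ∀ J' ∈ D, J ⊂ J' → w J' < w J
  w_dvd : ∀ J ∈ D, ∀ J' ∈ D, J ⊂ J' → w J' ∣ w J
  w_cover : ∀ J₁ ∈ D, ∀ J₂ ∈ D, ∀ J ∈ D, CoversIn D J₁ J → CoversIn D J₂ J → w J₁ = w J₂

/-- The diagonal matrix `(ζ, ζ⁻¹; i, j)` whose `(i,i)` entry is `ζ`, `(j,j)` entry is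
`ζ⁻¹` and whose other diagonal entries are `1`, as an element of `SL(n, ℂ)`. -/
noncomputable def diagPair {n : ℕ} (ζ : ℂˣ) (i j : Fin n) :
    Matrix.SpecialLinearGroup (Fin n) ℂ :=
  ⟨Matrix.diagonal
      (fun k => (if k = i then (ζ : ℂ) else 1) * (if k = j then ((ζ⁻¹ : ℂˣ) : ℂ) else 1)),
    by rw [Matrix.det_diagonal, Finset.prod_mul_distrib]; simp⟩

/-- The group `G_𝔻` associated with a (special) datum `(D, w)`: the subgroup of
`SL(n, ℂ)` generated by the matrices `(ζ, ζ⁻¹; i, j)` over all `J₁, J₂, J ∈ D` with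
`J₁ ⋖ J` and `J₂ ⋖ J`, all `i ∈ J₁`, `j ∈ J₂`, and `ζ` a primitive `w(J₁)`-th root of
unity. -/
noncomputable def specialGroup (n : ℕ) (D : Finset (Finset (Fin n)))
    (w : Finset (Fin n) → ℕ) : Subgroup (Matrix.SpecialLinearGroup (Fin n) ℂ) :=
  Subgroup.closure
    { g | ∃ (J₁ J₂ J : Finset (Fin n)) (_ : J₁ ∈ D) (_ : J₂ ∈ D) (_ : J ∈ D)
        (_ : CoversIn D J₁ J) (_ : CoversIn D J₂ J) (i : Fin n) (_ : i ∈ J₁)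
        (j : Fin n) (_ : j ∈ J₂) (ζ : ℂˣ),
        IsPrimitiveRoot ζ (w J₁) ∧ g = diagPair ζ i j }

theorem Subgroup.card_eq_card_inf_ker_mul_card_map {G G' : Type*} [Group G] [Group G']
    (H : Subgroup G) (f : G →* G') :
    Nat.card H = Nat.card (H ⊓ f.ker : Subgroup G) * Nat.card (H.map f) := by
  rw [← (f.domRestrict H).ker.card_mul_index, Subgroup.index_ker, MonoidHom.domRestrict_range,
    MonoidHom.ker_domRestrict, ← Subgroup.card_map_of_injective H.subtype_injective,
    Subgroup.subgroupOf_map_subtype, inf_comm]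

lemma Complex.exists_isPrimitiveRoot_units (N : ℕ) [NeZero N] : ∃ ζ : ℂˣ, IsPrimitiveRoot ζ N :=
  let ⟨_, hζ⟩ := HasEnoughRootsOfUnity.exists_primitiveRoot ℂ N
  ⟨_, hζ.isUnit_unit (NeZero.ne N)⟩

namespace SpecialDatum

variable {n : ℕ}

def prodHom (n : ℕ) : (Fin n → ℂˣ) →* ℂˣ := ∏ i, Pi.evalMonoidHom (fun _ => ℂˣ) i

lemma prodHom_apply (t : Fin n → ℂˣ) : prodHom n t = ∏ i, t i := by
  simp [prodHom]

def pairVec (ζ : ℂˣ) (i j : Fin n) : Fin n → ℂˣ := Pi.mulSingle i ζ * Pi.mulSingle j ζ⁻¹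

lemma pairVec_pow (ζ : ℂˣ) (i j : Fin n) (m : ℕ) : pairVec ζ i j ^ m = pairVec (ζ ^ m) i j := by
  rw [pairVec, pairVec, mul_pow, ← Pi.mulSingle_pow, ← Pi.mulSingle_pow, inv_pow]

lemma pairVec_mem_ker_prodHom (ζ : ℂˣ) (i j : Fin n) : pairVec ζ i j ∈ (prodHom n).ker := by
  simp [MonoidHom.mem_ker, prodHom_apply, pairVec, Finset.prod_mul_distrib]

lemma prod_pairVec_eq (t : Fin n → ℂˣ) (ht : t ∈ (prodHom n).ker) (l : Fin n) :
    ∏ k ∈ univ.erase l, pairVec (t k) k l = t := by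
  have hl : ∏ k ∈ univ.erase l, Pi.mulSingle l (t k)⁻¹ = (Pi.mulSingle l (t l) : Fin n → ℂˣ) := by
    have hmap := map_prod (MonoidHom.mulSingle (fun _ : Fin n => ℂˣ) l) (fun k => (t k)⁻¹)
      (univ.erase l)
    simp only [MonoidHom.mulSingle_apply] at hmap
    rw [← hmap, prod_inv_distrib, inv_eq_iff_mul_eq_one.mpr]
    rw [prod_erase_mul _ _ (mem_univ l), ← prodHom_apply, ht]
  simp only [pairVec]
  rw [prod_mul_distrib, hl, prod_erase_mul _ _ (mem_univ l), univ_prod_mulSingle]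

noncomputable def diagGL (n : ℕ) : (Fin n → ℂˣ) →* GL (Fin n) ℂ :=
  (Units.map (Matrix.diagonalRingHom (Fin n) ℂ : (Fin n → ℂ) →* Matrix (Fin n) (Fin n) ℂ)).comp
    MulEquiv.piUnits.symm.toMonoidHom

lemma coe_diagGL (x : Fin n → ℂˣ) :
    (diagGL n x : Matrix (Fin n) (Fin n) ℂ) = Matrix.diagonal (fun k => (x k : ℂ)) := rfl

lemma diagGL_pairVec (ζ : ℂˣ) (i j : Fin n) :
    diagGL n (pairVec ζ i j) = Matrix.SpecialLinearGroup.toGL (diagPair ζ i j) := by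
  ext : 1
  rw [coe_diagGL, Matrix.SpecialLinearGroup.coe_GL_coe_matrix]
  simp [pairVec, diagPair, Pi.mulSingle_apply, apply_ite Units.val]

lemma diagGL_injective : Function.Injective (diagGL n) := by
  intro x y h
  funext i
  ext
  simpa [coe_diagGL] using congrArg (fun g : GL (Fin n) ℂ => (g : Matrix (Fin n) (Fin n) ℂ) i i) h

lemma ker_powMonoidHom_eq_pi (a : ℕ) :
    (powMonoidHom a : (Fin n → ℂˣ) →* _).ker = Subgroup.pi Set.univ fun _ => rootsOfUnity a ℂ := by
  ext t
  simp [MonoidHom.mem_ker, Subgroup.mem_pi, funext_iff]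

lemma map_prodHom_ker_powMonoidHom (hn : 0 < n) (a : ℕ) :
    (powMonoidHom a : (Fin n → ℂˣ) →* _).ker.map (prodHom n) = rootsOfUnity a ℂ := by
  apply le_antisymm
  · rintro _ ⟨t, ht, rfl⟩
    rw [ker_powMonoidHom_eq_pi] at ht
    rw [prodHom_apply]
    exact prod_mem fun i _ => ht i (Set.mem_univ i)
  · intro ζ hζ
    refine ⟨Pi.mulSingle ⟨0, hn⟩ ζ, ?_, by rw [prodHom_apply, Fintype.prod_pi_mulSingle']⟩
    rw [ker_powMonoidHom_eq_pi]
    intro i _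
    by_cases hi : i = ⟨0, hn⟩ <;> simp [hi, hζ]

lemma card_ker_powMonoidHom_inf_ker_prodHom {a : ℕ} (ha : 0 < a) :
    Nat.card ((powMonoidHom a).ker ⊓ (prodHom n).ker : Subgroup (Fin n → ℂˣ)) = a ^ (n - 1) := by
  rcases Nat.eq_zero_or_pos n with rfl | hn
  · simp [Subsingleton.elim _ (⊥ : Subgroup (Fin 0 → ℂˣ))]
  have : NeZero a := ⟨ha.ne'⟩
  have hker : Nat.card (powMonoidHom a : (Fin n → ℂˣ) →* _).ker = a ^ n := by
    rw [ker_powMonoidHom_eq_pi]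
    exact (Nat.card_congr (Equiv.Set.univPi _)).trans (by
      rw [Nat.card_pi, prod_const, card_univ, Fintype.card_fin]
      exact congrArg (· ^ n) (Complex.card_rootsOfUnity a))
  have hcard := (powMonoidHom a : (Fin n → ℂˣ) →* _).ker.card_eq_card_inf_ker_mul_card_map
    (prodHom n)
  rw [hker, map_prodHom_ker_powMonoidHom hn, Complex.card_rootsOfUnity,
    ← pow_sub_one_mul hn.ne'] at hcard
  exact (Nat.eq_of_mul_eq_mul_right ha hcard).symm

def pairGens (D : Finset (Finset (Fin n))) (w : Finset (Fin n) → ℕ) : Set (Fin n → ℂˣ) :=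
  { t | ∃ (J₁ J₂ J : Finset (Fin n)) (_ : J₁ ∈ D) (_ : J₂ ∈ D) (_ : J ∈ D)
      (_ : CoversIn D J₁ J) (_ : CoversIn D J₂ J) (i : Fin n) (_ : i ∈ J₁)
      (j : Fin n) (_ : j ∈ J₂) (ζ : ℂˣ),
      IsPrimitiveRoot ζ (w J₁) ∧ t = pairVec ζ i j }

lemma card_specialGroup (D : Finset (Finset (Fin n))) (w : Finset (Fin n) → ℕ) :
    Nat.card (specialGroup n D w) = Nat.card (Subgroup.closure (pairGens D w)) := by
  have hmap : (specialGroup n D w).map Matrix.SpecialLinearGroup.toGL =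
      (Subgroup.closure (pairGens D w)).map (diagGL n) := by
    rw [specialGroup, MonoidHom.map_closure, MonoidHom.map_closure]
    congr 1
    ext g
    constructor
    · rintro ⟨_, ⟨J₁, J₂, J, h₁, h₂, h, hc₁, hc₂, i, hi, j, hj, ζ, hζ, rfl⟩, rfl⟩
      exact ⟨_, ⟨J₁, J₂, J, h₁, h₂, h, hc₁, hc₂, i, hi, j, hj, ζ, hζ, rfl⟩, diagGL_pairVec ζ i j⟩
    · rintro ⟨_, ⟨J₁, J₂, J, h₁, h₂, h, hc₁, hc₂, i, hi, j, hj, ζ, hζ, rfl⟩, rfl⟩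
      exact ⟨_, ⟨J₁, J₂, J, h₁, h₂, h, hc₁, hc₂, i, hi, j, hj, ζ, hζ, rfl⟩,
        (diagGL_pairVec ζ i j).symm⟩
  rw [← Subgroup.card_map_of_injective Matrix.SpecialLinearGroup.toGL_injective, hmap,
    Subgroup.card_map_of_injective diagGL_injective]

lemma closure_pairGens_le_ker_prodHom (D : Finset (Finset (Fin n))) (w : Finset (Fin n) → ℕ) :
    Subgroup.closure (pairGens D w) ≤ (prodHom n).ker := by
  rw [Subgroup.closure_le]
  rintro _ ⟨-, -, -, -, -, -, -, -, i, -, j, -, ζ, -, rfl⟩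
  exact pairVec_mem_ker_prodHom ζ i j

lemma pairVec_mem_closure_pairGens {D : Finset (Finset (Fin n))} {w : Finset (Fin n) → ℕ}
    {J₁ J₂ J : Finset (Fin n)} (h₁ : J₁ ∈ D) (h₂ : J₂ ∈ D) (h : J ∈ D) (hc₁ : CoversIn D J₁ J)
    (hc₂ : CoversIn D J₂ J) {i j : Fin n} (hi : i ∈ J₁) (hj : j ∈ J₂) (hw : 0 < w J₁)
    {ε : ℂˣ} (hε : ε ∈ rootsOfUnity (w J₁) ℂ) :
    pairVec ε i j ∈ Subgroup.closure (pairGens D w) := by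
  have : NeZero (w J₁) := ⟨hw.ne'⟩
  obtain ⟨ζ, hζ⟩ := Complex.exists_isPrimitiveRoot_units (w J₁)
  obtain ⟨k, -, rfl⟩ := hζ.eq_pow_of_mem_rootsOfUnity hε
  have hgen : pairVec ζ i j ∈ pairGens D w :=
    ⟨J₁, J₂, J, h₁, h₂, h, hc₁, hc₂, i, hi, j, hj, ζ, hζ, rfl⟩
  rw [← pairVec_pow]
  exact pow_mem (Subgroup.subset_closure hgen) k

section UniqueMaximal

variable {D : Finset (Finset (Fin n))} {J : Finset (Fin n)}

lemma subset_of_forall_maximal_eq (hJuniq : ∀ K ∈ D, (∀ L ∈ D, K ⊆ L → K = L) → K = J)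
    {K : Finset (Fin n)} (hK : K ∈ D) : K ⊆ J := by
  obtain ⟨L, hKL, hL⟩ := D.exists_le_maximal hK
  rw [← hJuniq L hL.prop fun L' hL' hLL' => hL.eq_of_le hL' hLL']
  exact hKL

lemma ne_of_ssubset_of_forall_maximal_eq (hJuniq : ∀ K ∈ D, (∀ L ∈ D, K ⊆ L → K = L) → K = J)
    {K K' : Finset (Fin n)} (hK' : K' ∈ D) (h : K ⊂ K') : K ≠ J := by
  rintro rfl
  exact (h.trans_subset (subset_of_forall_maximal_eq hJuniq hK')).ne rfl

lemma exists_coversIn {K : Finset (Fin n)} (hK : K ∈ D) (hKJ : K ⊂ J) :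
    ∃ L ∈ D, K ⊆ L ∧ CoversIn D L J := by
  obtain ⟨L, hKL, hL⟩ := (D.filter (· ⊂ J)).exists_le_maximal (mem_filter.2 ⟨hK, hKJ⟩)
  obtain ⟨hLD, hLJ⟩ := mem_filter.1 hL.prop
  refine ⟨L, hLD, hKL, hLJ, ?_⟩
  rintro ⟨M, hM, hLM, hMJ⟩
  exact hLM.ne (hL.eq_of_le (mem_filter.2 ⟨hM, hMJ⟩) hLM.subset)

lemma exists_coversIn_of_ne (hsing : ∀ i : Fin n, {i} ∈ D)
    (hJuniq : ∀ K ∈ D, (∀ L ∈ D, K ⊆ L → K = L) → K = J) {i j : Fin n} (hij : i ≠ j) :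
    ∃ J₁ ∈ D, ∃ J₂ ∈ D, CoversIn D J₁ J ∧ CoversIn D J₂ J ∧ i ∈ J₁ ∧ j ∈ J₂ := by
  have hcover : ∀ x y : Fin n, x ≠ y → ∃ L ∈ D, CoversIn D L J ∧ x ∈ L := by
    intro x y hxy
    have hxJ : {x} ⊆ J := subset_of_forall_maximal_eq hJuniq (hsing x)
    have hyJ : y ∈ J := subset_of_forall_maximal_eq hJuniq (hsing y) (mem_singleton_self y)
    have hxJ' : {x} ⊂ J := Finset.ssubset_iff_subset_ne.2
      ⟨hxJ, fun h => hxy (mem_singleton.1 (h ▸ hyJ)).symm⟩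
    obtain ⟨L, hL, hxL, hc⟩ := exists_coversIn (hsing x) hxJ'
    exact ⟨L, hL, hc, hxL (mem_singleton_self x)⟩
  obtain ⟨J₁, h₁, hc₁, hi⟩ := hcover i j hij
  obtain ⟨J₂, h₂, hc₂, hj⟩ := hcover j i hij.symm
  exact ⟨J₁, h₁, J₂, h₂, hc₁, hc₂, hi, hj⟩

def scaledWeight (w : Finset (Fin n) → ℕ) (J : Finset (Fin n)) (a : ℕ) : Finset (Fin n) → ℕ :=
  fun K => if K = J then 1 else a * w K

variable {w : Finset (Fin n) → ℕ} {a : ℕ}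

lemma scaledWeight_of_ne {K : Finset (Fin n)} (h : K ≠ J) : scaledWeight w J a K = a * w K :=
  if_neg h

variable (hD : IsSpecialDatum D w) (hJuniq : ∀ K ∈ D, (∀ L ∈ D, K ⊆ L → K = L) → K = J)
  (ha : 0 < a)
include hD hJuniq ha

lemma isSpecialDatum_scaledWeight : IsSpecialDatum D (scaledWeight w J a) where
  nonempty_mem := hD.nonempty_mem
  singleton_mem := hD.singleton_mem
  laminar := hD.laminar
  w_pos K hK := by
    unfold scaledWeight
    split_ifs
    exacts [one_pos, Nat.mul_pos ha (hD.w_pos K hK)]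
  w_max K hK hmax := if_pos (hJuniq K hK hmax)
  w_lt K hK K' hK' h := by
    rw [scaledWeight_of_ne (ne_of_ssubset_of_forall_maximal_eq hJuniq hK' h)]
    have hlt := hD.w_lt K hK K' hK' h
    unfold scaledWeight
    split_ifs
    · calc 1 ≤ w K' := hD.w_pos K' hK'
        _ < w K := hlt
        _ ≤ a * w K := Nat.le_mul_of_pos_left _ ha
    · exact Nat.mul_lt_mul_of_pos_left hlt ha
  w_dvd K hK K' hK' h := by
    rw [scaledWeight_of_ne (ne_of_ssubset_of_forall_maximal_eq hJuniq hK' h)]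
    unfold scaledWeight
    split_ifs
    exacts [one_dvd _, mul_dvd_mul_left a (hD.w_dvd K hK K' hK' h)]
  w_cover J₁ h₁ J₂ h₂ J₀ h₀ hc₁ hc₂ := by
    rw [scaledWeight_of_ne (ne_of_ssubset_of_forall_maximal_eq hJuniq h₀ hc₁.1),
      scaledWeight_of_ne (ne_of_ssubset_of_forall_maximal_eq hJuniq h₀ hc₂.1),
      hD.w_cover J₁ h₁ J₂ h₂ J₀ h₀ hc₁ hc₂]

lemma map_powMonoidHom_closure_pairGens_scaledWeight :
    (Subgroup.closure (pairGens D (scaledWeight w J a))).map (powMonoidHom a) =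
      Subgroup.closure (pairGens D w) := by
  apply le_antisymm
  · rw [MonoidHom.map_closure, Subgroup.closure_le]
    rintro _ ⟨_, ⟨J₁, J₂, J₀, h₁, h₂, h₀, hc₁, hc₂, i, hi, j, hj, ζ, hζ, rfl⟩, rfl⟩
    rw [scaledWeight_of_ne (ne_of_ssubset_of_forall_maximal_eq hJuniq h₀ hc₁.1)] at hζ
    exact Subgroup.subset_closure ⟨J₁, J₂, J₀, h₁, h₂, h₀, hc₁, hc₂, i, hi, j, hj, ζ ^ a,
      hζ.pow (Nat.mul_pos ha (hD.w_pos J₁ h₁)) rfl, pairVec_pow ζ i j a⟩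
  · rw [Subgroup.closure_le]
    rintro _ ⟨J₁, J₂, J₀, h₁, h₂, h₀, hc₁, hc₂, i, hi, j, hj, η, hη, rfl⟩
    have hne := ne_of_ssubset_of_forall_maximal_eq hJuniq h₀ hc₁.1
    have hw := Nat.mul_pos ha (hD.w_pos J₁ h₁)
    have : NeZero (a * w J₁) := ⟨hw.ne'⟩
    have : NeZero (w J₁) := ⟨(hD.w_pos J₁ h₁).ne'⟩
    obtain ⟨ξ, hξ⟩ := Complex.exists_isPrimitiveRoot_units (a * w J₁)
    -- `ξ ^ a` is a primitive `w J₁`-th root of unity, so `η` is one of its powers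
    obtain ⟨k, -, hk⟩ := (hξ.pow hw rfl).eq_pow_of_mem_rootsOfUnity
      ((mem_rootsOfUnity _ _).2 hη.pow_eq_one)
    refine ⟨pairVec (ξ ^ k) i j, pairVec_mem_closure_pairGens h₁ h₂ h₀ hc₁ hc₂ hi hj
      (by rwa [scaledWeight_of_ne hne]) ?_, ?_⟩
    · rw [scaledWeight_of_ne hne, mem_rootsOfUnity, ← pow_mul, mul_comm, pow_mul,
        hξ.pow_eq_one, one_pow]
    · rw [powMonoidHom_apply, pairVec_pow, ← pow_mul, mul_comm, pow_mul, hk]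

lemma ker_powMonoidHom_inf_ker_prodHom_le (hJ : J ∈ D) :
    (powMonoidHom a).ker ⊓ (prodHom n).ker ≤
      Subgroup.closure (pairGens D (scaledWeight w J a)) := by
  rintro t ⟨htpow, htprod⟩
  obtain ⟨l, -⟩ := hD.nonempty_mem J hJ
  rw [← prod_pairVec_eq t htprod l]
  refine prod_mem fun k hk => ?_
  obtain ⟨J₁, h₁, J₂, h₂, hc₁, hc₂, hk₁, hl₂⟩ :=
    exists_coversIn_of_ne hD.singleton_mem hJuniq (ne_of_mem_erase hk)
  have hne := ne_of_ssubset_of_forall_maximal_eq hJuniq hJ hc₁.1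
  refine pairVec_mem_closure_pairGens h₁ h₂ hJ hc₁ hc₂ hk₁ hl₂ ?_ ?_
  · rw [scaledWeight_of_ne hne]
    exact Nat.mul_pos ha (hD.w_pos J₁ h₁)
  · have htk : t k ^ a = 1 := congrFun (MonoidHom.mem_ker.1 htpow) k
    rw [scaledWeight_of_ne hne, mem_rootsOfUnity, pow_mul, htk, one_pow]

lemma card_closure_pairGens_scaledWeight (hJ : J ∈ D) :
    Nat.card (Subgroup.closure (pairGens D (scaledWeight w J a))) =
      a ^ (n - 1) * Nat.card (Subgroup.closure (pairGens D w)) := by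
  have hker : Subgroup.closure (pairGens D (scaledWeight w J a)) ⊓ (powMonoidHom a).ker =
      (powMonoidHom a).ker ⊓ (prodHom n).ker :=
    le_antisymm (fun _ ht => ⟨ht.2, closure_pairGens_le_ker_prodHom _ _ ht.1⟩)
      fun _ ht => ⟨ker_powMonoidHom_inf_ker_prodHom_le hD hJuniq ha hJ ht, ht.1⟩
  rw [Subgroup.card_eq_card_inf_ker_mul_card_map _ (powMonoidHom a), hker,
    card_ker_powMonoidHom_inf_ker_prodHom ha,
    map_powMonoidHom_closure_pairGens_scaledWeight hD hJuniq ha]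

end UniqueMaximal

end SpecialDatum

theorem stmt_8_general (n : ℕ) (D : Finset (Finset (Fin n)))
    (w : Finset (Fin n) → ℕ) (hD : IsSpecialDatum D w)
    (J : Finset (Fin n)) (hJ : J ∈ D)
    (hJuniq : ∀ K ∈ D, (∀ L ∈ D, K ⊆ L → K = L) → K = J)
    (a : ℕ) (ha : 0 < a) :
    IsSpecialDatum D (fun K => if K = J then 1 else a * w K) ∧
      Nat.card (specialGroup n D (fun K => if K = J then 1 else a * w K)) =
        a ^ (n - 1) * Nat.card (specialGroup n D w) := by
  refine ⟨SpecialDatum.isSpecialDatum_scaledWeight hD hJuniq ha, ?_⟩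
  rw [SpecialDatum.card_specialGroup, SpecialDatum.card_specialGroup]
  exact SpecialDatum.card_closure_pairGens_scaledWeight hD hJuniq ha hJ

theorem stmt_8 (n : ℕ) (hn : 1 ≤ n) (D : Finset (Finset (Fin n)))
    (w : Finset (Fin n) → ℕ) (hD : IsSpecialDatum D w)
    (J : Finset (Fin n)) (hJ : J ∈ D)
    (hJmax : ∀ K ∈ D, J ⊆ K → J = K)
    (hJuniq : ∀ K ∈ D, (∀ L ∈ D, K ⊆ L → K = L) → K = J)
    (a : ℕ) (ha : 0 < a) :
    IsSpecialDatum D (fun K => if K = J then 1 else a * w K) ∧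
      Nat.card (specialGroup n D (fun K => if K = J then 1 else a * w K)) =
        a ^ (n - 1) * Nat.card (specialGroup n D w) :=
  stmt_8_general n D w hD J hJ hJuniq a ha
end

section
/- Let 𝔻 = (D, w) be an n-dimensional special datum. Then the ℂ-subalgebra R_𝔻 of the polynomial ring ℂ[x₁,…,xₙ] generated by the monomials x_J^{w(J)} for J ∈ D, where x_J = ∏_{j∈J} x_j, is equal to the ring of invariants ℂ[x₁,…,xₙ]^{G_𝔻} = {f ∈ ℂ[x₁,…,xₙ] : g·f = f for all g ∈ G_𝔻}, where a diagonal matrix g = diag(c₁,…,cₙ) ∈ G_𝔻 acts on polynomials by the ℂ-algebra map sending x_i to c_i·x_i. -/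
open Finset

open MvPolynomial

/-!
A diagonal matrix `diag c` scales the monomial `x^e` by `∏ cᵢ^{eᵢ}`, so both sides are spanned
by monomials and it suffices to compare exponent sets. The generator `(ζ, ζ⁻¹; i, j)` fixes `x^e`
iff `w J₁ ∣ eᵢ - eⱼ`, so the invariant exponents form the monoid `E` of those `e` with
`eᵢ ≡ eⱼ [mod w J₁]` whenever `i ∈ J₁`, `j ∈ J₂` for children `J₁, J₂` of a common `J`. Laminarity
and `w J' ∣ w J` for `J ⊆ J'` put the exponent of each `x_J^{w J}` in `E`. Conversely, for
`0 ≠ e ∈ E` take `K ∈ D` maximal with `e > 0` on `K`: the parent of `K` contains some `j₀` with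
`e j₀ = 0`, and the congruence at the parent gives `w K ∣ eⱼ` for `j ∈ K`; hence
`e - w K • 𝟙_K ∈ E`, and induction on `e` finishes.
-/

section Monomials

variable {σ R : Type*}

theorem aeval_smul_X_monomial [CommSemiring R] (c : σ → R) (e : σ →₀ ℕ) (r : R) :
    aeval (fun i => c i • X i) (monomial e r) = monomial e (e.prod (fun i k => c i ^ k) * r) := by
  rw [aeval_monomial, monomial_eq]
  simp only [smul_eq_C_mul, mul_pow, Finsupp.prod, Finset.prod_mul_distrib, algebraMap_eq, map_mul,
    map_prod, map_pow]
  ring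

theorem coeff_aeval_smul_X [CommSemiring R] (c : σ → R) (f : MvPolynomial σ R) (e : σ →₀ ℕ) :
    coeff e (aeval (fun i => c i • X i) f) = e.prod (fun i k => c i ^ k) * coeff e f := by
  classical
  induction f using MvPolynomial.induction_on' with
  | monomial d r =>
    rw [aeval_smul_X_monomial, coeff_monomial, coeff_monomial]
    split_ifs with h
    · rw [h]
    · rw [mul_zero]
  | add p q hp hq => rw [map_add, coeff_add, coeff_add, hp, hq, mul_add]

theorem aeval_smul_X_eq_self_iff [CommRing R] [NoZeroDivisors R] (c : σ → R)
    (f : MvPolynomial σ R) :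
    aeval (fun i => c i • X i) f = f ↔ ∀ e ∈ f.support, e.prod (fun i k => c i ^ k) = 1 := by
  simp only [MvPolynomial.ext_iff, coeff_aeval_smul_X, mem_support_iff]
  refine forall_congr' fun e => ⟨fun h hf => mul_right_cancel₀ hf (by rw [h, one_mul]), fun h => ?_⟩
  by_cases hf : coeff e f = 0
  · rw [hf, mul_zero]
  · rw [h hf, one_mul]

theorem aeval_mul_smul_X [CommSemiring R] (c d : σ → R) :
    (aeval fun i => (c i * d i) • X i : MvPolynomial σ R →ₐ[R] MvPolynomial σ R) =
      (aeval fun i => c i • X i).comp (aeval fun i => d i • X i) :=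
  algHom_ext fun i => by simp [mul_smul, smul_comm (d i)]

theorem pow_prod_X_eq_monomial_sum_single [CommSemiring R] (J : Finset σ) (m : ℕ) :
    (∏ j ∈ J, X j) ^ m = monomial (∑ j ∈ J, Finsupp.single j m) (1 : R) := by
  rw [monomial_sum_one, ← Finset.prod_pow]
  simp only [X_pow_eq_monomial]

theorem toSubmodule_adjoin_image_monomial_one [CommSemiring R] (G : Set (σ →₀ ℕ)) :
    Subalgebra.toSubmodule (Algebra.adjoin R ((monomial · (1 : R)) '' G)) =
      restrictSupport R (AddSubmonoid.closure G) := by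
  have : Submonoid.closure ((monomial · (1 : R)) '' G) =
      (AddSubmonoid.toSubmonoid (AddSubmonoid.closure G)).map (monomialOneHom R σ) := by
    rw [AddSubmonoid.toSubmonoid_closure, MonoidHom.map_mclosure]
    rfl
  rw [Algebra.adjoin_eq_span, restrictSupport_eq_span, this]
  rfl

end Monomials

section DiagPair

variable {n : ℕ}

theorem diagPair_apply_self (ζ : ℂˣ) (i j k : Fin n) :
    (diagPair ζ i j : Matrix (Fin n) (Fin n) ℂ) k k =
      (if k = i then (ζ : ℂ) else 1) * (if k = j then ((ζ⁻¹ : ℂˣ) : ℂ) else 1) :=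
  Matrix.diagonal_apply_eq _ k

theorem diagPair_mul_diagPair_inv (ζ : ℂˣ) (i j : Fin n) :
    diagPair ζ i j * diagPair ζ⁻¹ i j = 1 := by
  ext k l
  rw [Matrix.SpecialLinearGroup.coe_mul]
  simp only [diagPair, Matrix.diagonal_mul_diagonal, Matrix.SpecialLinearGroup.coe_one]
  rw [← Matrix.diagonal_one]
  congr 2
  ext k
  split_ifs <;> simp

theorem diagPair_inv (ζ : ℂˣ) (i j : Fin n) : (diagPair ζ i j)⁻¹ = diagPair ζ⁻¹ i j :=
  inv_eq_of_mul_eq_one_right (diagPair_mul_diagPair_inv ζ i j)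

theorem prod_pow_diagPair_apply_self (ζ : ℂˣ) (i j : Fin n) (e : Fin n →₀ ℕ) :
    e.prod (fun k m => (diagPair ζ i j : Matrix (Fin n) (Fin n) ℂ) k k ^ m) =
      ((ζ ^ ((e i : ℤ) - e j) : ℂˣ) : ℂ) := by
  rw [Finsupp.prod_fintype _ _ (fun _ => pow_zero _)]
  simp_rw [diagPair_apply_self, mul_pow]
  rw [Finset.prod_mul_distrib]
  simp_rw [ite_pow, one_pow]
  rw [Fintype.prod_ite_eq', Fintype.prod_ite_eq']
  simp [zpow_sub]

theorem aeval_diagPair_eq_self_iff {m : ℕ} {ζ : ℂˣ} (hζ : IsPrimitiveRoot ζ m) (i j : Fin n)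
    (f : MvPolynomial (Fin n) ℂ) :
    aeval (fun k => (diagPair ζ i j : Matrix (Fin n) (Fin n) ℂ) k k • X k) f = f ↔
      ∀ e ∈ f.support, (m : ℤ) ∣ e i - e j := by
  rw [aeval_smul_X_eq_self_iff]
  refine forall₂_congr fun e _ => ?_
  rw [prod_pow_diagPair_apply_self, Units.val_eq_one, hζ.zpow_eq_one_iff_dvd]

end DiagPair

section Covers

variable {n : ℕ} {D : Finset (Finset (Fin n))} {A B : Finset (Fin n)}

theorem coversIn_iff_covBy (hA : A ∈ D) (hB : B ∈ D) :
    CoversIn D A B ↔ (⟨A, hA⟩ : D) ⋖ ⟨B, hB⟩ := by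
  simp only [CoversIn, CovBy, Subtype.mk_lt_mk, Subtype.forall, not_exists, not_and]

theorem exists_subset_coversIn (hA : A ∈ D) (hB : B ∈ D) (h : A ⊂ B) :
    ∃ C ∈ D, A ⊆ C ∧ CoversIn D C B := by
  obtain ⟨⟨C, hC⟩, hAC, hCB⟩ := exists_le_covBy_of_lt (α := D) (a := ⟨A, hA⟩) (b := ⟨B, hB⟩) h
  exact ⟨C, hC, hAC, (coversIn_iff_covBy hC hB).2 hCB⟩

theorem exists_coversIn_subset (hA : A ∈ D) (hB : B ∈ D) (h : A ⊂ B) :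
    ∃ C ∈ D, CoversIn D A C ∧ C ⊆ B := by
  obtain ⟨⟨C, hC⟩, hAC, hCB⟩ := exists_covBy_le_of_lt (α := D) (a := ⟨A, hA⟩) (b := ⟨B, hB⟩) h
  exact ⟨C, hC, (coversIn_iff_covBy hA hC).2 hAC, hCB⟩

end Covers

theorem finsetSum_single_apply {σ M : Type*} [DecidableEq σ] [AddCommMonoid M] (J : Finset σ)
    (m : M) (i : σ) : (∑ j ∈ J, Finsupp.single j m) i = if i ∈ J then m else 0 := by
  simp [Finsupp.finsetSum_apply, Finsupp.single_apply]

section Exponents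

variable {n : ℕ} {D : Finset (Finset (Fin n))} {w : Finset (Fin n) → ℕ}

variable (D w) in
def generatorExponents : Set (Fin n →₀ ℕ) :=
  (fun J => ∑ j ∈ J, Finsupp.single j (w J)) '' D

variable (D w) in
def invariantExponents : AddSubmonoid (Fin n →₀ ℕ) where
  carrier := {e | ∀ J₁ ∈ D, ∀ J₂ ∈ D, ∀ J ∈ D, CoversIn D J₁ J → CoversIn D J₂ J →
    ∀ i ∈ J₁, ∀ j ∈ J₂, (w J₁ : ℤ) ∣ e i - e j}
  add_mem' {a b} ha hb J₁ h₁ J₂ h₂ J hJ hc₁ hc₂ i hi j hj := by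
    rw [Finsupp.add_apply, Finsupp.add_apply, Nat.cast_add, Nat.cast_add, add_sub_add_comm]
    exact dvd_add (ha J₁ h₁ J₂ h₂ J hJ hc₁ hc₂ i hi j hj) (hb J₁ h₁ J₂ h₂ J hJ hc₁ hc₂ i hi j hj)
  zero_mem' := by simp

theorem mem_invariantExponents_of_add_mem {a b : Fin n →₀ ℕ}
    (hab : a + b ∈ invariantExponents D w) (hb : b ∈ invariantExponents D w) :
    a ∈ invariantExponents D w := by
  intro J₁ h₁ J₂ h₂ J hJ hc₁ hc₂ i hi j hj
  have := dvd_sub (hab J₁ h₁ J₂ h₂ J hJ hc₁ hc₂ i hi j hj) (hb J₁ h₁ J₂ h₂ J hJ hc₁ hc₂ i hi j hj)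
  rwa [Finsupp.add_apply, Finsupp.add_apply, Nat.cast_add, Nat.cast_add, add_sub_add_comm,
    add_sub_cancel_right] at this

end Exponents

namespace IsSpecialDatum

variable {n : ℕ} {D : Finset (Finset (Fin n))} {w : Finset (Fin n) → ℕ}
  (hD : IsSpecialDatum D w)
include hD

theorem subset_or_subset_of_mem {J K : Finset (Fin n)} (hJ : J ∈ D) (hK : K ∈ D) {i : Fin n}
    (hiJ : i ∈ J) (hiK : i ∈ K) : J ⊆ K ∨ K ⊆ J := by
  rcases hD.laminar J hJ K hK with h | h | h
  · exact .inl h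
  · exact .inr h
  · exact absurd (h ▸ Finset.mem_inter.2 ⟨hiJ, hiK⟩) (Finset.notMem_empty i)

theorem w_dvd_of_subset {J K : Finset (Fin n)} (hJ : J ∈ D) (hK : K ∈ D) (h : J ⊆ K) :
    w K ∣ w J := by
  rcases h.eq_or_ssubset with rfl | h
  · rfl
  · exact hD.w_dvd J hJ K hK h

theorem subset_of_coversIn {S J₁ J₂ J : Finset (Fin n)} (hS : S ∈ D) (h₁ : J₁ ∈ D) (hJ : J ∈ D)
    (hc₁ : CoversIn D J₁ J) (hc₂ : CoversIn D J₂ J) {i j : Fin n} (hi : i ∈ J₁) (hj : j ∈ J₂)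
    (hiS : i ∈ S) (hjS : j ∉ S) : S ⊆ J₁ := by
  by_contra hSJ₁
  have hJ₁S : J₁ ⊂ S :=
    ((hD.subset_or_subset_of_mem h₁ hS hi hiS).resolve_right hSJ₁).ssubset_of_not_subset hSJ₁
  have hJS : ¬ J ⊆ S := fun h => hjS (h (hc₂.1.subset hj))
  have hSJ : S ⊂ J := ((hD.subset_or_subset_of_mem hJ hS (hc₁.1.subset hi) hiS).resolve_left
    hJS).ssubset_of_not_subset hJS
  exact hc₁.2 ⟨S, hS, hJ₁S, hSJ⟩

theorem generatorExponents_subset : generatorExponents D w ⊆ invariantExponents D w := by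
  rintro _ ⟨K, hK, rfl⟩ J₁ h₁ J₂ h₂ J hJ hc₁ hc₂ i hi j hj
  simp only [finsetSum_single_apply]
  by_cases hiK : i ∈ K <;> by_cases hjK : j ∈ K <;>
    simp only [hiK, hjK, if_true, if_false, sub_self, dvd_zero, Nat.cast_zero, sub_zero, zero_sub,
      dvd_neg, Int.natCast_dvd_natCast]
  · exact hD.w_dvd_of_subset hK h₁ (hD.subset_of_coversIn hK h₁ hJ hc₁ hc₂ hi hj hiK hjK)
  · rw [hD.w_cover J₁ h₁ J₂ h₂ J hJ hc₁ hc₂]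
    exact hD.w_dvd_of_subset hK h₂ (hD.subset_of_coversIn hK h₂ hJ hc₂ hc₁ hj hi hjK hiK)

theorem w_dvd_apply_of_forall_ssubset {e : Fin n →₀ ℕ} (he : e ∈ invariantExponents D w)
    {K : Finset (Fin n)} (hK : K ∈ D) (hmax : ∀ L ∈ D, K ⊂ L → ∃ j ∈ L, e j = 0) {j : Fin n}
    (hj : j ∈ K) : w K ∣ e j := by
  by_cases htop : ∀ L ∈ D, K ⊆ L → K = L
  · rw [hD.w_max K hK htop]
    exact one_dvd _
  push Not at htop
  obtain ⟨L, hL, hKL, hKL'⟩ := htop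
  obtain ⟨P, hP, hKP, -⟩ :=
    exists_coversIn_subset hK hL (Finset.ssubset_iff_subset_ne.2 ⟨hKL, hKL'⟩)
  obtain ⟨j₀, hj₀, he₀⟩ := hmax P hP hKP.1
  have hj₀P : {j₀} ⊂ P := Finset.ssubset_iff_subset_ne.2 ⟨Finset.singleton_subset_iff.2 hj₀,
    fun h => Finset.notMem_empty j (Finset.ssubset_singleton_iff.1 (h ▸ hKP.1) ▸ hj)⟩
  obtain ⟨C, hC, hj₀C, hCP⟩ := exists_subset_coversIn (hD.singleton_mem j₀) hP hj₀P
  have := he K hK C hC P hP hKP hCP j hj j₀ (Finset.singleton_subset_iff.1 hj₀C)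
  rwa [he₀, Nat.cast_zero, sub_zero, Int.natCast_dvd_natCast] at this

theorem exists_generatorExponents_le {e : Fin n →₀ ℕ} (he : e ∈ invariantExponents D w)
    (he0 : e ≠ 0) : ∃ g ∈ generatorExponents D w, g ≠ 0 ∧ g ≤ e := by
  obtain ⟨i, hi⟩ := Finsupp.support_nonempty_iff.2 he0
  rw [Finsupp.mem_support_iff] at hi
  obtain ⟨K, hKF, hKmax⟩ := Finset.exists_maximal
    (s := D.filter fun K => i ∈ K ∧ ∀ j ∈ K, e j ≠ 0) ⟨{i}, by simp [hD.singleton_mem, hi]⟩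
  obtain ⟨hK, hiK, hpos⟩ := Finset.mem_filter.1 hKF
  have hmax : ∀ L ∈ D, K ⊂ L → ∃ j ∈ L, e j = 0 := by
    intro L hL hKL
    by_contra! h
    exact hKL.not_subset (hKmax (Finset.mem_filter.2 ⟨hL, hKL.subset hiK, h⟩) hKL.subset)
  refine ⟨_, ⟨K, hK, rfl⟩, Finsupp.ne_iff.2 ⟨i, ?_⟩, fun j => ?_⟩
  · simp [finsetSum_single_apply, hiK, (hD.w_pos K hK).ne']
  · rw [finsetSum_single_apply]
    split_ifs with hj
    · exact Nat.le_of_dvd (Nat.pos_of_ne_zero (hpos j hj))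
        (hD.w_dvd_apply_of_forall_ssubset he hK hmax hj)
    · exact Nat.zero_le _

theorem closure_generatorExponents :
    AddSubmonoid.closure (generatorExponents D w) = invariantExponents D w := by
  refine le_antisymm (AddSubmonoid.closure_le.2 hD.generatorExponents_subset) fun e he => ?_
  induction e using WellFoundedLT.induction with
  | _ e ih =>
  rcases eq_or_ne e 0 with rfl | he0
  · exact zero_mem _
  obtain ⟨g, hg, hg0, hge⟩ := hD.exists_generatorExponents_le he he0
  have hlt : e - g < e :=
    tsub_le_self.lt_of_ne fun h => hg0 (by simpa [h] using tsub_add_cancel_of_le hge)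
  rw [← tsub_add_cancel_of_le hge] at he ⊢
  exact add_mem (ih _ hlt (mem_invariantExponents_of_add_mem he (hD.generatorExponents_subset hg)))
    (AddSubmonoid.subset_closure hg)

end IsSpecialDatum

section Invariants

variable {n : ℕ} {D : Finset (Finset (Fin n))} {w : Finset (Fin n) → ℕ}
  {f : MvPolynomial (Fin n) ℂ}

theorem aeval_diagPair_eq_self_of_support_subset
    (hf : ↑f.support ⊆ (invariantExponents D w : Set (Fin n →₀ ℕ)))
    {J₁ J₂ J : Finset (Fin n)} (h₁ : J₁ ∈ D) (h₂ : J₂ ∈ D) (hJ : J ∈ D) (hc₁ : CoversIn D J₁ J)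
    (hc₂ : CoversIn D J₂ J) {i j : Fin n} (hi : i ∈ J₁) (hj : j ∈ J₂) {ζ : ℂˣ}
    (hζ : IsPrimitiveRoot ζ (w J₁)) :
    aeval (fun k => (diagPair ζ i j : Matrix (Fin n) (Fin n) ℂ) k k • X k) f = f :=
  (aeval_diagPair_eq_self_iff hζ i j f).2 fun _ he => hf he J₁ h₁ J₂ h₂ J hJ hc₁ hc₂ i hi j hj

theorem aeval_eq_self_of_mem_specialGroup
    (hf : ↑f.support ⊆ (invariantExponents D w : Set (Fin n →₀ ℕ)))
    {g : Matrix.SpecialLinearGroup (Fin n) ℂ} (hg : g ∈ specialGroup n D w) :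
    aeval (fun i => (g : Matrix (Fin n) (Fin n) ℂ) i i • X i) f = f := by
  obtain ⟨c, hc, hcf⟩ : ∃ c : Fin n → ℂ, (g : Matrix (Fin n) (Fin n) ℂ) = Matrix.diagonal c ∧
      aeval (fun k => c k • X k) f = f := by
    induction hg using Subgroup.closure_induction'' with
    | mem _ hx =>
      obtain ⟨_, _, _, h₁, h₂, hJ, hc₁, hc₂, _, hi, _, hj, _, hζ, rfl⟩ := hx
      exact ⟨_, (Matrix.isDiag_diagonal _).diagonal_diag.symm,
        aeval_diagPair_eq_self_of_support_subset hf h₁ h₂ hJ hc₁ hc₂ hi hj hζ⟩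
    | inv_mem _ hx =>
      obtain ⟨_, _, _, h₁, h₂, hJ, hc₁, hc₂, _, hi, _, hj, _, hζ, rfl⟩ := hx
      rw [diagPair_inv]
      exact ⟨_, (Matrix.isDiag_diagonal _).diagonal_diag.symm,
        aeval_diagPair_eq_self_of_support_subset hf h₁ h₂ hJ hc₁ hc₂ hi hj hζ.inv⟩
    | one => exact ⟨1, Matrix.diagonal_one.symm, by simp⟩
    | mul x y _ _ hx hy =>
      obtain ⟨c, hc, hcf⟩ := hx
      obtain ⟨d, hd, hdf⟩ := hy
      refine ⟨c * d, ?_, ?_⟩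
      · rw [Matrix.SpecialLinearGroup.coe_mul, hc, hd, Matrix.diagonal_mul_diagonal]
        rfl
      · simp only [Pi.mul_apply]
        rw [aeval_mul_smul_X, AlgHom.comp_apply, hdf, hcf]
  simp only [hc, Matrix.diagonal_apply_eq, hcf]

theorem forall_mem_specialGroup_aeval_eq_self_iff (hw : ∀ J ∈ D, 0 < w J) :
    (∀ g ∈ specialGroup n D w,
        aeval (fun i => (g : Matrix (Fin n) (Fin n) ℂ) i i • X i) f = f) ↔
      ↑f.support ⊆ (invariantExponents D w : Set (Fin n →₀ ℕ)) := by
  refine ⟨fun h e he J₁ h₁ J₂ h₂ J hJ hc₁ hc₂ i hi j hj => ?_,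
    fun hf _ => aeval_eq_self_of_mem_specialGroup hf⟩
  have hw₁ := (hw J₁ h₁).ne'
  have hζ := (Complex.isPrimitiveRoot_exp _ hw₁).isUnit_unit hw₁
  exact (aeval_diagPair_eq_self_iff hζ i j f).1
    (h _ (Subgroup.subset_closure ⟨J₁, J₂, J, h₁, h₂, hJ, hc₁, hc₂, i, hi, j, hj, _, hζ, rfl⟩))
    e he

end Invariants

theorem stmt_10_general (n : ℕ) (D : Finset (Finset (Fin n)))
    (w : Finset (Fin n) → ℕ) (hD : IsSpecialDatum D w) :
    (Algebra.adjoin ℂ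
        { p : MvPolynomial (Fin n) ℂ | ∃ J ∈ D, p = (∏ j ∈ J, X j) ^ (w J) } :
      Set (MvPolynomial (Fin n) ℂ)) =
      { f : MvPolynomial (Fin n) ℂ |
        ∀ g ∈ specialGroup n D w,
          aeval (fun i : Fin n =>
            ((g : Matrix.SpecialLinearGroup (Fin n) ℂ) : Matrix (Fin n) (Fin n) ℂ) i i
              • X i) f = f } := by
  have hgen : { p : MvPolynomial (Fin n) ℂ | ∃ J ∈ D, p = (∏ j ∈ J, X j) ^ (w J) } =
      (monomial · 1) '' generatorExponents D w := by
    ext p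
    simp [generatorExponents, pow_prod_X_eq_monomial_sum_single, eq_comm]
  ext f
  rw [hgen, SetLike.mem_coe, ← Subalgebra.mem_toSubmodule, toSubmodule_adjoin_image_monomial_one,
    hD.closure_generatorExponents, mem_restrictSupport_iff, Set.mem_ofPred_eq,
    forall_mem_specialGroup_aeval_eq_self_iff hD.w_pos]

/-- Proposition 2.5 (Watanabe, Proposition 1.7 in [W]): for an `n`-dimensional special
datum `𝔻 = (D, w)`, the `ℂ`-subalgebra `R_𝔻` of `ℂ[x₁,…,xₙ]` generated by the
monomials `x_J^{w(J)}`, `J ∈ D` (where `x_J = ∏_{j∈J} x_j`), coincides with the ring of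
invariants of `G_𝔻`, a diagonal matrix `g` acting by the `ℂ`-algebra map
`x_i ↦ g_{ii}·x_i`. -/
theorem stmt_10 (n : ℕ) (hn : 1 ≤ n) (D : Finset (Finset (Fin n)))
    (w : Finset (Fin n) → ℕ) (hD : IsSpecialDatum D w) :
    (Algebra.adjoin ℂ
        { p : MvPolynomial (Fin n) ℂ | ∃ J ∈ D, p = (∏ j ∈ J, X j) ^ (w J) } :
      Set (MvPolynomial (Fin n) ℂ)) =
      { f : MvPolynomial (Fin n) ℂ |
        ∀ g ∈ specialGroup n D w,
          aeval (fun i : Fin n =>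
            ((g : Matrix.SpecialLinearGroup (Fin n) ℂ) : Matrix (Fin n) (Fin n) ℂ) i i
              • X i) f = f } :=
  stmt_10_general n D w hD
end

section
/- Let 𝔻 = (D, w) be a special datum and let J ∈ D be a maximal element of D with |J| ≥ 2. Let J₁,…,J_m be the elements of D with J_i ⋖ J (so that J = J₁ ∪ ⋯ ∪ J_m). Define D' = D \ {J} and w' : D' → ℕ₊ by w'(K) = w(K)/w(J₁) if K ⊆ J_i for some i, and w'(K) = w(K) if K ⊄ J. Then 𝔻' = (D', w') is a special datum. -/
/-! Contracting the maximal block `J` to its covers keeps every axiom because of one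
observation: for `K ⊆ K'` in `D` with `K' ≠ J`, the set `K` lies below a cover of `J` iff `K'`
does. Hence the division by `w J₁` (which divides every weight below a cover of `J`) is applied
uniformly along chains and to all covers of a common element, and the covers of `J` become
maximal with weight `w J₁ / w J₁ = 1`. -/

open Finset

open scoped Classical

variable {n : ℕ} {D : Finset (Finset (Fin n))} {w : Finset (Fin n) → ℕ}
  {J J₁ K K' : Finset (Fin n)}

def BelowCover (D : Finset (Finset (Fin n))) (J K : Finset (Fin n)) : Prop :=
  ∃ K' ∈ D, CoversIn D K' J ∧ K ⊆ K'

noncomputable def contractWeight (D : Finset (Finset (Fin n))) (w : Finset (Fin n) → ℕ)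
    (J J₁ K : Finset (Fin n)) : ℕ :=
  if BelowCover D J K then w K / w J₁ else w K

theorem BelowCover.mono (h : BelowCover D J K') (hKK' : K ⊆ K') : BelowCover D J K :=
  let ⟨K₀, hK₀, hcov, hK'K₀⟩ := h
  ⟨K₀, hK₀, hcov, hKK'.trans hK'K₀⟩

theorem CoversIn.eq_or_eq_of_subset_of_subset {K₀ : Finset (Fin n)} (h : CoversIn D K₀ J)
    (hK : K ∈ D) (hK₀K : K₀ ⊆ K) (hKJ : K ⊆ J) : K = K₀ ∨ K = J := by
  by_contra! hne
  exact h.2 ⟨K, hK, Finset.ssubset_iff_subset_ne.2 ⟨hK₀K, hne.1.symm⟩,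
    Finset.ssubset_iff_subset_ne.2 ⟨hKJ, hne.2⟩⟩

theorem CoversIn.of_erase (hJmax : ∀ L ∈ D, J ⊆ L → J = L) (hK : K ∈ D)
    {K₁ : Finset (Fin n)} (h : CoversIn (D.erase J) K₁ K) : CoversIn D K₁ K := by
  refine ⟨h.1, fun ⟨L, hL, hK₁L, hLK⟩ => h.2 ⟨L, mem_erase.2 ⟨?_, hL⟩, hK₁L, hLK⟩⟩
  rintro rfl
  exact hLK.ne (hJmax K hK hLK.subset)

theorem CoversIn.of_maximal_erase (hmax : ∀ L ∈ D.erase J, K ⊆ L → K = L) (hKJ : K ⊂ J) :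
    CoversIn D K J :=
  ⟨hKJ, fun ⟨M, hM, hKM, hMJ⟩ => hKM.ne (hmax M (mem_erase.2 ⟨hMJ.ne, hM⟩) hKM.subset)⟩

namespace IsSpecialDatum

theorem subset_or_subset_of_common_subset (hD : IsSpecialDatum D w) {A B C : Finset (Fin n)}
    (hA : A ∈ D) (hB : B ∈ D) (hC : C ∈ D) (hCA : C ⊆ A) (hCB : C ⊆ B) : A ⊆ B ∨ B ⊆ A := by
  rcases hD.laminar A hA B hB with h | h | h
  · exact .inl h
  · exact .inr h
  · obtain ⟨x, hx⟩ := hD.nonempty_mem C hC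
    simpa [h] using mem_inter.2 ⟨hCA hx, hCB hx⟩

theorem w_dvd_of_subset_s11 (hD : IsSpecialDatum D w) (hK : K ∈ D) (hK' : K' ∈ D)
    (hKK' : K ⊆ K') : w K' ∣ w K := by
  rcases eq_or_ne K K' with rfl | hne
  · rfl
  · exact hD.w_dvd K hK K' hK' (Finset.ssubset_iff_subset_ne.2 ⟨hKK', hne⟩)

theorem dvd_w_of_belowCover (hD : IsSpecialDatum D w) (hJ : J ∈ D) (hJ₁ : J₁ ∈ D)
    (hJ₁cov : CoversIn D J₁ J) (hK : K ∈ D) (h : BelowCover D J K) : w J₁ ∣ w K := by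
  obtain ⟨K₀, hK₀, hcov, hKK₀⟩ := h
  rw [← hD.w_cover K₀ hK₀ J₁ hJ₁ J hJ hcov hJ₁cov]
  exact hD.w_dvd_of_subset_s11 hK hK₀ hKK₀

theorem belowCover_of_subset (hD : IsSpecialDatum D w) (hJ : J ∈ D)
    (hJmax : ∀ L ∈ D, J ⊆ L → J = L) (hK : K ∈ D) (hK' : K' ∈ D) (hK'J : K' ≠ J)
    (hKK' : K ⊆ K') (h : BelowCover D J K) : BelowCover D J K' := by
  obtain ⟨K₀, hK₀, hcov, hKK₀⟩ := h
  rcases hD.subset_or_subset_of_common_subset hK' hK₀ hK hKK' hKK₀ with hK'K₀ | hK₀K'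
  · exact ⟨K₀, hK₀, hcov, hK'K₀⟩
  rcases hD.subset_or_subset_of_common_subset hK' hJ hK₀ hK₀K' hcov.1.subset with hK'J' | hJK'
  · rcases hcov.eq_or_eq_of_subset_of_subset hK' hK₀K' hK'J' with rfl | rfl
    · exact ⟨K', hK', hcov, subset_rfl⟩
    · exact absurd rfl hK'J
  · exact absurd (hJmax K' hK' hJK').symm hK'J

theorem belowCover_iff_of_subset (hD : IsSpecialDatum D w) (hJ : J ∈ D)
    (hJmax : ∀ L ∈ D, J ⊆ L → J = L) (hK : K ∈ D) (hK' : K' ∈ D.erase J) (hKK' : K ⊆ K') :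
    BelowCover D J K ↔ BelowCover D J K' :=
  ⟨hD.belowCover_of_subset hJ hJmax hK (mem_of_mem_erase hK') (ne_of_mem_erase hK') hKK',
    fun h => h.mono hKK'⟩

theorem contractWeight_pos (hD : IsSpecialDatum D w) (hJ : J ∈ D) (hJ₁ : J₁ ∈ D)
    (hJ₁cov : CoversIn D J₁ J) (hK : K ∈ D) : 0 < contractWeight D w J J₁ K := by
  unfold contractWeight
  split_ifs with h
  · have hdvd := hD.dvd_w_of_belowCover hJ hJ₁ hJ₁cov hK h
    exact Nat.div_pos (Nat.le_of_dvd (hD.w_pos K hK) hdvd) (hD.w_pos J₁ hJ₁)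
  · exact hD.w_pos K hK

theorem contractWeight_eq_one_of_maximal (hD : IsSpecialDatum D w) (hJ : J ∈ D)
    (hJ₁ : J₁ ∈ D) (hJ₁cov : CoversIn D J₁ J) (hK : K ∈ D.erase J)
    (hmax : ∀ L ∈ D.erase J, K ⊆ L → K = L) : contractWeight D w J J₁ K = 1 := by
  have hKD := mem_of_mem_erase hK
  by_cases hmaxD : ∀ L ∈ D, K ⊆ L → K = L
  · have hnot : ¬ BelowCover D J K := fun ⟨K₀, hK₀, hcov, hKK₀⟩ =>
      ne_of_mem_erase hK (hmaxD J hJ (hKK₀.trans hcov.1.subset))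
    rw [contractWeight, if_neg hnot, hD.w_max K hKD hmaxD]
  push Not at hmaxD
  obtain ⟨L, hL, hKL, hKL'⟩ := hmaxD
  obtain rfl : L = J := by_contra fun hLJ => hKL' (hmax L (mem_erase.2 ⟨hLJ, hL⟩) hKL)
  have hcov : CoversIn D K L :=
    .of_maximal_erase hmax (Finset.ssubset_iff_subset_ne.2 ⟨hKL, hKL'⟩)
  rw [contractWeight, if_pos ⟨K, hKD, hcov, subset_rfl⟩,
    hD.w_cover K hKD J₁ hJ₁ L hJ hcov hJ₁cov, Nat.div_self (hD.w_pos J₁ hJ₁)]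

theorem contractWeight_lt (hD : IsSpecialDatum D w) (hJ : J ∈ D)
    (hJmax : ∀ L ∈ D, J ⊆ L → J = L) (hJ₁ : J₁ ∈ D) (hJ₁cov : CoversIn D J₁ J)
    (hK : K ∈ D) (hK' : K' ∈ D.erase J) (hKK' : K ⊂ K') :
    contractWeight D w J J₁ K' < contractWeight D w J J₁ K := by
  have hlt := hD.w_lt K hK K' (mem_of_mem_erase hK') hKK'
  rw [contractWeight, contractWeight, hD.belowCover_iff_of_subset hJ hJmax hK hK' hKK'.subset]
  split_ifs with h
  · exact Nat.div_lt_div_of_lt_of_dvd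
      (hD.dvd_w_of_belowCover hJ hJ₁ hJ₁cov hK (h.mono hKK'.subset)) hlt
  · exact hlt

theorem contractWeight_dvd (hD : IsSpecialDatum D w) (hJ : J ∈ D)
    (hJmax : ∀ L ∈ D, J ⊆ L → J = L) (hJ₁ : J₁ ∈ D) (hJ₁cov : CoversIn D J₁ J)
    (hK : K ∈ D) (hK' : K' ∈ D.erase J) (hKK' : K ⊂ K') :
    contractWeight D w J J₁ K' ∣ contractWeight D w J J₁ K := by
  have hdvd := hD.w_dvd K hK K' (mem_of_mem_erase hK') hKK'
  rw [contractWeight, contractWeight, hD.belowCover_iff_of_subset hJ hJmax hK hK' hKK'.subset]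
  split_ifs with h
  · exact Nat.div_dvd_div (hD.dvd_w_of_belowCover hJ hJ₁ hJ₁cov (mem_of_mem_erase hK') h) hdvd
  · exact hdvd

theorem contractWeight_eq_of_covers (hD : IsSpecialDatum D w) (hJ : J ∈ D)
    (hJmax : ∀ L ∈ D, J ⊆ L → J = L) {K₁ K₂ : Finset (Fin n)} (hK₁ : K₁ ∈ D) (hK₂ : K₂ ∈ D)
    (hK : K ∈ D.erase J) (hc₁ : CoversIn (D.erase J) K₁ K) (hc₂ : CoversIn (D.erase J) K₂ K) :
    contractWeight D w J J₁ K₁ = contractWeight D w J J₁ K₂ := by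
  have hKD := mem_of_mem_erase hK
  have hc₁' := hc₁.of_erase hJmax hKD
  have hc₂' := hc₂.of_erase hJmax hKD
  rw [contractWeight, contractWeight, hD.belowCover_iff_of_subset hJ hJmax hK₁ hK hc₁.1.subset,
    hD.belowCover_iff_of_subset hJ hJmax hK₂ hK hc₂.1.subset,
    hD.w_cover K₁ hK₁ K₂ hK₂ K hKD hc₁' hc₂']

theorem contract (hD : IsSpecialDatum D w) (hJ : J ∈ D)
    (hJmax : ∀ L ∈ D, J ⊆ L → J = L) (hJ₁ : J₁ ∈ D) (hJ₁cov : CoversIn D J₁ J)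
    (hJcard : 2 ≤ J.card) :
    IsSpecialDatum (D.erase J) (contractWeight D w J J₁) where
  nonempty_mem K hK := hD.nonempty_mem K (mem_of_mem_erase hK)
  singleton_mem i := mem_erase.2 ⟨by rintro rfl; simp at hJcard, hD.singleton_mem i⟩
  laminar K hK K' hK' := hD.laminar K (mem_of_mem_erase hK) K' (mem_of_mem_erase hK')
  w_pos K hK := hD.contractWeight_pos hJ hJ₁ hJ₁cov (mem_of_mem_erase hK)
  w_max K hK hmax := hD.contractWeight_eq_one_of_maximal hJ hJ₁ hJ₁cov hK hmax
  w_lt K hK K' hK' hKK' :=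
    hD.contractWeight_lt hJ hJmax hJ₁ hJ₁cov (mem_of_mem_erase hK) hK' hKK'
  w_dvd K hK K' hK' hKK' :=
    hD.contractWeight_dvd hJ hJmax hJ₁ hJ₁cov (mem_of_mem_erase hK) hK' hKK'
  w_cover K₁ hK₁ K₂ hK₂ K hK hc₁ hc₂ :=
    hD.contractWeight_eq_of_covers hJ hJmax (mem_of_mem_erase hK₁) (mem_of_mem_erase hK₂) hK
      hc₁ hc₂

end IsSpecialDatum

theorem stmt_11_general (n : ℕ) (D : Finset (Finset (Fin n)))
    (w : Finset (Fin n) → ℕ) (hD : IsSpecialDatum D w)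
    (J : Finset (Fin n)) (hJ : J ∈ D)
    (hJmax : ∀ K ∈ D, J ⊆ K → J = K) (hJcard : 2 ≤ J.card)
    (J₁ : Finset (Fin n)) (hJ₁ : J₁ ∈ D) (hJ₁cov : CoversIn D J₁ J) :
    IsSpecialDatum (D.erase J)
      (fun K => if ∃ K' ∈ D, CoversIn D K' J ∧ K ⊆ K' then w K / w J₁ else w K) := by
  convert hD.contract hJ hJmax hJ₁ hJ₁cov hJcard using 2 with K
  -- the two `if`s differ only in their `Decidable` instances
  exact if_congr Iff.rfl rfl rfl

/-- Lemma 2.10 (first assertion): let `𝔻 = (D, w)` be a special datum and `J ∈ D` a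
maximal element with `|J| ≥ 2`; let `J₁` be one of the elements covered by `J`. Define
`D' = D \ {J}` and `w'(K) = w(K)/w(J₁)` if `K` is contained in some element covered by
`J`, and `w'(K) = w(K)` otherwise. Then `(D', w')` is a special datum. -/
theorem stmt_11 (n : ℕ) (hn : 1 ≤ n) (D : Finset (Finset (Fin n)))
    (w : Finset (Fin n) → ℕ) (hD : IsSpecialDatum D w)
    (J : Finset (Fin n)) (hJ : J ∈ D)
    (hJmax : ∀ K ∈ D, J ⊆ K → J = K) (hJcard : 2 ≤ J.card)
    (J₁ : Finset (Fin n)) (hJ₁ : J₁ ∈ D) (hJ₁cov : CoversIn D J₁ J) :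
    IsSpecialDatum (D.erase J)
      (fun K => if ∃ K' ∈ D, CoversIn D K' J ∧ K ⊆ K' then w K / w J₁ else w K) :=
  stmt_11_general n D w hD J hJ hJmax hJcard J₁ hJ₁ hJ₁cov
end

section
/- Let 𝔻 = (D, w) be a special datum and let J ∈ D be a maximal element of D with |J| ≥ 2. Let J₁,…,J_m be the elements of D with J_i ⋖ J, set a = w(J₁), and let 𝔻' = (D \ {J}, w') be the special datum with w'(K) = w(K)/a if K ⊆ J_i for some i and w'(K) = w(K) otherwise. Then there is an isomorphism of ℂ-algebras R_𝔻 ≅ R_{𝔻'}[Y]/(Y^a − x_{J₁}·x_{J₂}⋯x_{J_m}), where x_{J_i} = ∏_{j∈J_i} x_j (note x_{J_i} ∈ R_{𝔻'} since w'(J_i) = 1). -/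
open Finset

open scoped Classical
open MvPolynomial

set_option synthInstance.maxHeartbeats 1000000
set_option maxHeartbeats 1000000

/-- The ring `R_𝔻` of a datum `(D, w)`: the `ℂ`-subalgebra of `ℂ[x₁,…,xₙ]` generated
by the monomials `x_K^{w(K)} = (∏_{j∈K} x_j)^{w(K)}` for `K ∈ D`. -/
noncomputable def datumRing (n : ℕ) (D : Finset (Finset (Fin n)))
    (w : Finset (Fin n) → ℕ) : Subalgebra ℂ (MvPolynomial (Fin n) ℂ) :=
  Algebra.adjoin ℂ { p : MvPolynomial (Fin n) ℂ | ∃ K ∈ D, p = (∏ j ∈ K, X j) ^ (w K) }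

/-!
Substituting `x_j ↦ x_j ^ a` for `j ∈ J` (and fixing the other variables) is an injective
endomorphism `φ` of `ℂ[x₁,…,xₙ]`. Since `J` is the disjoint union of the `Jᵢ` and every
`K ∈ D` with `K ⊊ J` lies in some `Jᵢ`, where `a ∣ w(K)`, the map `φ` sends the generator
`x_K ^ w'(K)` of `R_𝔻'` to the generator `x_K ^ w(K)` of `R_𝔻`, and `y` to `x_J ^ a`. As
`w(J) = 1`, `R_𝔻` is generated by `φ(R_𝔻')` and `x_J`, so `Y ↦ x_J` gives a surjection
`R_𝔻'[Y]/(Y^a - y) → R_𝔻`. It is injective: for `j₀ ∈ J`, every monomial of `φ(R_𝔻')` has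
`x_{j₀}`-exponent divisible by `a`, while `x_J ^ k` has exponent `k`, so grading by this
exponent modulo `a` separates the terms `φ(cₖ) x_J ^ k`, `k < a`, of a reduced polynomial in
the kernel.
-/

section

open Polynomial

namespace AdjoinRoot

variable {R S : Type*} [CommRing R] [CommRing S]

theorem lift_injective_of_monic [Nontrivial R] {f : R[X]} (hf : f.Monic) {i : R →+* S} {x : S}
    (hx : f.eval₂ i x = 0) (h : ∀ q : R[X], q.degree < f.degree → q.eval₂ i x = 0 → q = 0) :
    Function.Injective (lift i x hx) := by
  rw [injective_iff_map_eq_zero]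
  intro z hz
  obtain ⟨p, rfl⟩ := mk_surjective z
  rw [← mk_leftInverse hf (mk f p), modByMonicHom_mk] at hz ⊢
  rw [lift_mk] at hz
  rw [h _ (degree_modByMonic_lt p hf) hz, map_zero]

theorem range_liftAlgHom {T : Type*} [CommRing T] [Algebra S R] [Algebra S T]
    (f : R[X]) (i : R →ₐ[S] T) (x : T) (hx : f.eval₂ i x = 0) :
    (liftAlgHom f i x hx).range = Algebra.adjoin S (insert x (i.range : Set T)) := by
  refine le_antisymm ?_ (Algebra.adjoin_le ?_)
  · rintro _ ⟨z, rfl⟩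
    induction z using induction_on with | ih p => ?_
    change liftAlgHom f i x hx (mk f p) ∈ _
    rw [liftAlgHom_mk, eval₂_eq_sum_range]
    refine Subalgebra.sum_mem _ fun k _ => Subalgebra.mul_mem _ ?_ (Subalgebra.pow_mem _ ?_ _)
    · exact Algebra.subset_adjoin (Set.mem_insert_of_mem _ ⟨_, rfl⟩)
    · exact Algebra.subset_adjoin (Set.mem_insert _ _)
  · rintro _ (rfl | ⟨r, rfl⟩)
    · exact ⟨root f, liftAlgHom_root f i _ hx⟩
    · exact ⟨of f r, liftAlgHom_of f i x hx r⟩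

end AdjoinRoot

end

namespace MvPolynomial

variable {σ R : Type*}

theorem aeval_X_pow_injective [Field R] [IsAlgClosed R] {e : σ → ℕ} (he : ∀ i, e i ≠ 0) :
    Function.Injective (aeval (R := R) fun i => (X i : MvPolynomial σ R) ^ e i) := by
  rw [injective_iff_map_eq_zero]
  intro p hp
  refine MvPolynomial.funext fun x => ?_
  choose u hu using fun i => IsAlgClosed.exists_pow_nat_eq (x i) (Nat.pos_of_ne_zero (he i))
  have := congrArg (aeval u) hp
  simp only [comp_aeval_apply, map_pow, aeval_X, hu, map_zero] at this
  rwa [map_zero, ← coe_aeval_eq_eval]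

theorem aeval_X_pow_prod_X_pow [CommSemiring R] {e : σ → ℕ} {K : Finset σ} {c : ℕ}
    (hc : ∀ i ∈ K, e i = c) (m : ℕ) :
    aeval (R := R) (fun i => (X i : MvPolynomial σ R) ^ e i) ((∏ i ∈ K, X i) ^ m) =
      (∏ i ∈ K, X i) ^ (c * m) := by
  have hX : ∀ i ∈ K, aeval (R := R) (fun i => (X i : MvPolynomial σ R) ^ e i) (X i) = X i ^ c :=
    fun i hi => by rw [aeval_X, hc i hi]
  rw [map_pow, map_prod, Finset.prod_congr rfl hX, Finset.prod_pow, pow_mul]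

theorem isWeightedHomogeneous_aeval_zero {τ M : Type*} [CommSemiring R] [AddCommMonoid M]
    {ω : σ → M} {f : τ → MvPolynomial σ R} (hf : ∀ i, IsWeightedHomogeneous ω (f i) 0)
    (p : MvPolynomial τ R) : IsWeightedHomogeneous ω (aeval f p) 0 := by
  induction p using MvPolynomial.induction_on with
  | C r => simpa using isWeightedHomogeneous_C ω r
  | add p q hp hq => simpa using hp.add hq
  | mul_X p i hp => simpa using hp.mul (hf i)

theorem isWeightedHomogeneous_X_pow_single [CommSemiring R] [DecidableEq σ] {M : Type*}
    [AddCommMonoid M] {j₀ : σ} {m : M} {e : σ → ℕ} (he : e j₀ • m = 0) (i : σ) :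
    IsWeightedHomogeneous (Pi.single j₀ m) ((X i : MvPolynomial σ R) ^ e i) 0 := by
  convert (isWeightedHomogeneous_X R (Pi.single j₀ m) i).pow (e i)
  rcases eq_or_ne i j₀ with rfl | hi
  · rw [Pi.single_eq_same, he]
  · rw [Pi.single_eq_of_ne hi, smul_zero]

theorem isWeightedHomogeneous_prod_X_single [CommSemiring R] [DecidableEq σ] {M : Type*}
    [AddCommMonoid M] {j₀ : σ} (m : M) {J : Finset σ} (hj₀ : j₀ ∈ J) :
    IsWeightedHomogeneous (Pi.single j₀ m) (∏ j ∈ J, (X j : MvPolynomial σ R)) m := by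
  convert IsWeightedHomogeneous.prod J (fun j => (X j : MvPolynomial σ R)) (Pi.single j₀ m)
    fun j _ => isWeightedHomogeneous_X R _ j
  rw [Finset.sum_pi_single', if_pos hj₀]

theorem eq_zero_of_eval₂_eq_zero_of_isWeightedHomogeneous {A : Type*} [CommRing R] [IsDomain R]
    [CommRing A] {a : ℕ} {ω : σ → ZMod a} {g : A →+* MvPolynomial σ R}
    (hg : Function.Injective g) (hg0 : ∀ u, IsWeightedHomogeneous ω (g u) 0)
    {t : MvPolynomial σ R} (ht : IsWeightedHomogeneous ω t 1) (ht0 : t ≠ 0)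
    {q : Polynomial A} (hq : q.degree < a) (hqt : q.eval₂ g t = 0) : q = 0 := by
  rcases eq_or_ne q 0 with rfl | hq0
  · rfl
  have hdeg : q.natDegree < a := (Polynomial.natDegree_lt_iff_degree_lt hq0).2 hq
  have hhom : ∀ k : ℕ, IsWeightedHomogeneous ω (g (q.coeff k) * t ^ k) k := fun k => by
    simpa using (hg0 _).mul (ht.pow k)
  have hterm : ∀ k < a, g (q.coeff k) * t ^ k = 0 := by
    intro k hk
    have := congrArg (weightedHomogeneousComponent ω (k : ZMod a)) hqt
    rwa [Polynomial.eval₂_eq_sum_range' g hdeg, map_sum, sum_eq_single_of_mem k (mem_range.2 hk),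
      (hhom k).weightedHomogeneousComponent_same, map_zero] at this
    intro i hi hik
    refine (hhom i).weightedHomogeneousComponent_ne _ ?_
    rw [Ne, ZMod.natCast_eq_natCast_iff', Nat.mod_eq_of_lt hk, Nat.mod_eq_of_lt (mem_range.1 hi)]
    exact Ne.symm hik
  ext k
  rw [Polynomial.coeff_zero]
  by_cases hk : k < a
  · exact hg (by simpa [ht0] using hterm k hk)
  · exact Polynomial.coeff_eq_zero_of_natDegree_lt (by omega)

theorem nonempty_algEquiv_adjoin_root {A : Type*} [CommRing R] [IsDomain R] [CommRing A]
    [Nontrivial A] [Algebra R A] {a : ℕ} (ha : a ≠ 0) {ω : σ → ZMod a}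
    {i : A →ₐ[R] MvPolynomial σ R} (hi : Function.Injective i)
    (hi0 : ∀ u, IsWeightedHomogeneous ω (i u) 0) {t : MvPolynomial σ R}
    (ht : IsWeightedHomogeneous ω t 1) (ht0 : t ≠ 0) {y : A} (hy : i y = t ^ a) :
    Nonempty (Algebra.adjoin R (insert t (i.range : Set (MvPolynomial σ R))) ≃ₐ[R]
      AdjoinRoot (Polynomial.X ^ a - Polynomial.C y)) := by
  have hroot : (Polynomial.X ^ a - Polynomial.C y).eval₂ (i : A →+* MvPolynomial σ R) t = 0 := by
    simp [hy]
  have hinj : Function.Injective (AdjoinRoot.liftAlgHom _ i t hroot) := by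
    rw [AdjoinRoot.coe_liftAlgHom]
    exact AdjoinRoot.lift_injective_of_monic (Polynomial.monic_X_pow_sub_C _ ha) _ fun q hq =>
      eq_zero_of_eval₂_eq_zero_of_isWeightedHomogeneous hi hi0 ht ht0
        (hq.trans_eq (Polynomial.degree_X_pow_sub_C (Nat.pos_of_ne_zero ha) _))
  rw [← AdjoinRoot.range_liftAlgHom _ i t hroot]
  exact ⟨(AlgEquiv.ofInjective _ hinj).symm⟩

end MvPolynomial

theorem exists_coversIn_superset {n : ℕ} (D : Finset (Finset (Fin n))) {K J : Finset (Fin n)}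
    (hK : K ∈ D) (hKJ : K ⊂ J) : ∃ K' ∈ D, CoversIn D K' J ∧ K ⊆ K' := by
  obtain ⟨K', hK', hmax⟩ := (D.filter fun L => K ⊆ L ∧ L ⊂ J).exists_max_image card
    ⟨K, mem_filter.2 ⟨hK, subset_rfl, hKJ⟩⟩
  obtain ⟨hK'D, hKK', hK'J⟩ := mem_filter.1 hK'
  refine ⟨K', hK'D, ⟨hK'J, ?_⟩, hKK'⟩
  rintro ⟨L, hLD, hK'L, hLJ⟩
  exact (card_lt_card hK'L).not_ge (hmax L (mem_filter.2 ⟨hLD, hKK'.trans hK'L.subset, hLJ⟩))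

namespace IsSpecialDatum

variable {n : ℕ} {D : Finset (Finset (Fin n))} {w : Finset (Fin n) → ℕ}

theorem disjoint_of_coversIn (hD : IsSpecialDatum D w) {K₁ K₂ J : Finset (Fin n)}
    (hK₁ : K₁ ∈ D) (hK₂ : K₂ ∈ D) (h₁ : CoversIn D K₁ J) (h₂ : CoversIn D K₂ J) (hne : K₁ ≠ K₂) :
    Disjoint K₁ K₂ := by
  rcases hD.laminar K₁ hK₁ K₂ hK₂ with h | h | h
  · exact absurd ⟨K₂, hK₂, ssubset_of_subset_of_ne h hne, h₂.1⟩ h₁.2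
  · exact absurd ⟨K₁, hK₁, ssubset_of_subset_of_ne h hne.symm, h₁.1⟩ h₂.2
  · exact disjoint_iff_inter_eq_empty.2 h

theorem ssubset_or_disjoint_of_maximal (hD : IsSpecialDatum D w) {J K : Finset (Fin n)}
    (hJ : J ∈ D) (hJmax : ∀ K ∈ D, J ⊆ K → J = K) (hK : K ∈ D) (hKJ : K ≠ J) :
    K ⊂ J ∨ Disjoint K J := by
  rcases hD.laminar K hK J hJ with h | h | h
  · exact Or.inl (ssubset_of_subset_of_ne h hKJ)
  · exact absurd (hJmax K hK h).symm hKJ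
  · exact Or.inr (disjoint_iff_inter_eq_empty.2 h)

theorem biUnion_coversIn (hD : IsSpecialDatum D w) {J : Finset (Fin n)} (hJcard : 2 ≤ J.card)
    {C : Finset (Finset (Fin n))} (hC : ∀ K, K ∈ C ↔ K ∈ D ∧ CoversIn D K J) :
    C.biUnion id = J := by
  ext j
  simp only [mem_biUnion, id]
  constructor
  · rintro ⟨K, hK, hjK⟩
    exact ((hC K).1 hK).2.1.subset hjK
  · intro hj
    obtain ⟨j', hj', hne⟩ := exists_mem_ne (by omega : 1 < J.card) j
    have hjJ : {j} ⊂ J :=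
      (ssubset_iff_of_subset (singleton_subset_iff.2 hj)).2 ⟨j', hj', by simpa using hne⟩
    obtain ⟨K, hKD, hKJ, hjK⟩ := exists_coversIn_superset D (hD.singleton_mem j) hjJ
    exact ⟨K, (hC K).2 ⟨hKD, hKJ⟩, singleton_subset_iff.1 hjK⟩

theorem prod_coversIn_prod_X {R : Type*} [CommSemiring R] (hD : IsSpecialDatum D w)
    {J : Finset (Fin n)} (hJcard : 2 ≤ J.card) {C : Finset (Finset (Fin n))}
    (hC : ∀ K, K ∈ C ↔ K ∈ D ∧ CoversIn D K J) :
    ∏ K ∈ C, ∏ j ∈ K, (X j : MvPolynomial (Fin n) R) = ∏ j ∈ J, X j := by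
  rw [← hD.biUnion_coversIn hJcard hC, prod_biUnion]
  · rfl
  · intro K₁ h₁ K₂ h₂ hne
    obtain ⟨hK₁, hK₁J⟩ := (hC K₁).1 h₁
    obtain ⟨hK₂, hK₂J⟩ := (hC K₂).1 h₂
    exact hD.disjoint_of_coversIn hK₁ hK₂ hK₁J hK₂J hne

theorem dvd_of_subset_coversIn (hD : IsSpecialDatum D w) {J K K' J₁ : Finset (Fin n)}
    (hJ : J ∈ D) (hK : K ∈ D) (hK' : K' ∈ D) (hK'J : CoversIn D K' J) (hKK' : K ⊆ K')
    (hJ₁ : J₁ ∈ D) (hJ₁J : CoversIn D J₁ J) : w J₁ ∣ w K := by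
  rw [hD.w_cover J₁ hJ₁ K' hK' J hJ hJ₁J hK'J]
  rcases eq_or_ne K K' with rfl | hne
  · rfl
  · exact hD.w_dvd K hK K' hK' (ssubset_of_subset_of_ne hKK' hne)

theorem aeval_prod_X_pow_of_mem_erase (hD : IsSpecialDatum D w) {J J₁ K : Finset (Fin n)}
    {C : Finset (Finset (Fin n))} (hJ : J ∈ D) (hJmax : ∀ K ∈ D, J ⊆ K → J = K)
    (hC : ∀ K, K ∈ C ↔ K ∈ D ∧ CoversIn D K J) (hJ₁ : J₁ ∈ C) (hK : K ∈ D.erase J) :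
    aeval (R := ℂ) (fun j => (X j : MvPolynomial (Fin n) ℂ) ^ (if j ∈ J then w J₁ else 1))
      ((∏ j ∈ K, X j) ^ (if ∃ K' ∈ C, K ⊆ K' then w K / w J₁ else w K)) =
      (∏ j ∈ K, X j) ^ w K := by
  obtain ⟨hKJ, hKD⟩ := mem_erase.1 hK
  obtain ⟨hJ₁D, hJ₁J⟩ := (hC J₁).1 hJ₁
  rcases hD.ssubset_or_disjoint_of_maximal hJ hJmax hKD hKJ with hsub | hdisj
  · obtain ⟨K', hK'D, hK'J, hKK'⟩ := exists_coversIn_superset D hKD hsub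
    rw [if_pos ⟨K', (hC K').2 ⟨hK'D, hK'J⟩, hKK'⟩,
      aeval_X_pow_prod_X_pow fun j hj => if_pos (hsub.subset hj),
      Nat.mul_div_cancel' (hD.dvd_of_subset_coversIn hJ hKD hK'D hK'J hKK' hJ₁D hJ₁J)]
  · have hnot : ¬ ∃ K' ∈ C, K ⊆ K' := by
      rintro ⟨K', hK', hKK'⟩
      have hKJ' : K ⊆ J := hKK'.trans ((hC K').1 hK').2.1.subset
      exact (hD.nonempty_mem K hKD).ne_empty
        ((disjoint_self_iff_empty K).1 (hdisj.mono_right hKJ'))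
    rw [if_neg hnot,
      aeval_X_pow_prod_X_pow (c := 1) fun j hj => if_neg (disjoint_left.1 hdisj hj), one_mul]

end IsSpecialDatum

theorem datumRing_map {n : ℕ} {D : Finset (Finset (Fin n))} {w w' : Finset (Fin n) → ℕ}
    (φ : MvPolynomial (Fin n) ℂ →ₐ[ℂ] MvPolynomial (Fin n) ℂ)
    (h : ∀ K ∈ D, φ ((∏ j ∈ K, X j) ^ w' K) = (∏ j ∈ K, X j) ^ w K) :
    (datumRing n D w').map φ = datumRing n D w := by
  rw [datumRing, datumRing, AlgHom.map_adjoin]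
  congr 1
  ext p
  constructor
  · rintro ⟨_, ⟨K, hK, rfl⟩, rfl⟩
    exact ⟨K, hK, h K hK⟩
  · rintro ⟨K, hK, rfl⟩
    exact ⟨_, ⟨K, hK, rfl⟩, h K hK⟩

theorem datumRing_eq_adjoin_insert {n : ℕ} {D : Finset (Finset (Fin n))}
    {w : Finset (Fin n) → ℕ} {J : Finset (Fin n)} (hJ : J ∈ D) (hwJ : w J = 1) :
    datumRing n D w =
      Algebra.adjoin ℂ (insert (∏ j ∈ J, X j) (datumRing n (D.erase J) w : Set _)) := by
  rw [datumRing, datumRing, Algebra.adjoin_insert_adjoin]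
  congr 1
  ext p
  constructor
  · rintro ⟨K, hK, rfl⟩
    by_cases hKJ : K = J
    · subst hKJ
      exact Or.inl (by rw [hwJ, pow_one])
    · exact Or.inr ⟨K, mem_erase.2 ⟨hKJ, hK⟩, rfl⟩
  · rintro (rfl | ⟨K, hK, rfl⟩)
    · exact ⟨J, hJ, by rw [hwJ, pow_one]⟩
    · exact ⟨K, mem_of_mem_erase hK, rfl⟩

theorem stmt_12_general (n : ℕ) (D : Finset (Finset (Fin n)))
    (w : Finset (Fin n) → ℕ) (hD : IsSpecialDatum D w)
    (J : Finset (Fin n)) (hJ : J ∈ D)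
    (hJmax : ∀ K ∈ D, J ⊆ K → J = K) (hJcard : 2 ≤ J.card)
    (C : Finset (Finset (Fin n)))
    (hC : ∀ K, K ∈ C ↔ K ∈ D ∧ CoversIn D K J)
    (J₁ : Finset (Fin n)) (hJ₁ : J₁ ∈ C)
    (y : datumRing n (D.erase J)
      (fun K => if ∃ K' ∈ C, K ⊆ K' then w K / w J₁ else w K))
    (hy : (y : MvPolynomial (Fin n) ℂ) = ∏ K ∈ C, ∏ j ∈ K, X j) :
    Nonempty
      (datumRing n D w ≃ₐ[ℂ]
        AdjoinRoot (Polynomial.X ^ (w J₁) - Polynomial.C y)) := by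
  have ha : w J₁ ≠ 0 := (hD.w_pos J₁ ((hC J₁).1 hJ₁).1).ne'
  obtain ⟨j₀, hj₀⟩ := card_pos.1 (by omega : 0 < J.card)
  let e : Fin n → ℕ := fun j => if j ∈ J then w J₁ else 1
  have he : ∀ j, e j ≠ 0 := fun j => by by_cases hj : j ∈ J <;> simp [e, hj, ha]
  let φ := aeval (R := ℂ) fun j => (X j : MvPolynomial (Fin n) ℂ) ^ e j
  let i := φ.comp (Subalgebra.val (datumRing n (D.erase J)
    fun K => if ∃ K' ∈ C, K ⊆ K' then w K / w J₁ else w K))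
  have hi0 : ∀ u, IsWeightedHomogeneous (Pi.single j₀ (1 : ZMod (w J₁))) (i u) 0 := fun _ =>
    isWeightedHomogeneous_aeval_zero (isWeightedHomogeneous_X_pow_single (by simp [e, hj₀])) _
  have hy' : i y = (∏ j ∈ J, X j) ^ w J₁ := by
    have hφJ := aeval_X_pow_prod_X_pow (R := ℂ) (e := e) (fun j hj => if_pos hj) 1
    rw [pow_one, mul_one] at hφJ
    change φ y = _
    rw [hy, hD.prod_coversIn_prod_X hJcard hC]
    exact hφJ
  obtain ⟨ψ⟩ := nonempty_algEquiv_adjoin_root ha (i := i)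
    ((aeval_X_pow_injective he).comp Subtype.val_injective) hi0
    (isWeightedHomogeneous_prod_X_single _ hj₀) (prod_ne_zero_iff.2 fun j _ => X_ne_zero j) hy'
  rw [AlgHom.range_comp, Subalgebra.range_val,
    datumRing_map φ fun K hK => hD.aeval_prod_X_pow_of_mem_erase hJ hJmax hC hJ₁ hK,
    ← datumRing_eq_adjoin_insert hJ (hD.w_max J hJ hJmax)] at ψ
  exact ⟨ψ⟩

/-- Lemma 2.10 (ring isomorphism): let `𝔻 = (D, w)` be a special datum, `J ∈ D` a
maximal element with `|J| ≥ 2`, `C` the set of elements of `D` covered by `J` (so that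
`J` is their union), `J₁ ∈ C` and `a = w(J₁)`. Let `𝔻' = (D \ {J}, w')` be the special
datum with `w'(K) = w(K)/a` if `K` is contained in some member of `C` and
`w'(K) = w(K)` otherwise. If `y ∈ R_{𝔻'}` is the element
`x_{J₁}·x_{J₂}⋯x_{J_m} = ∏_{K ∈ C} x_K`, then `R_𝔻 ≅ R_{𝔻'}[Y]/(Y^a − y)`
as `ℂ`-algebras (`AdjoinRoot f = R_{𝔻'}[Y]/(f)`). -/
theorem stmt_12 (n : ℕ) (hn : 1 ≤ n) (D : Finset (Finset (Fin n)))
    (w : Finset (Fin n) → ℕ) (hD : IsSpecialDatum D w)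
    (J : Finset (Fin n)) (hJ : J ∈ D)
    (hJmax : ∀ K ∈ D, J ⊆ K → J = K) (hJcard : 2 ≤ J.card)
    (C : Finset (Finset (Fin n)))
    (hC : ∀ K, K ∈ C ↔ K ∈ D ∧ CoversIn D K J)
    (J₁ : Finset (Fin n)) (hJ₁ : J₁ ∈ C)
    (y : datumRing n (D.erase J)
      (fun K => if ∃ K' ∈ C, K ⊆ K' then w K / w J₁ else w K))
    (hy : (y : MvPolynomial (Fin n) ℂ) = ∏ K ∈ C, ∏ j ∈ K, X j) :
    Nonempty
      (datumRing n D w ≃ₐ[ℂ]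
        AdjoinRoot (Polynomial.X ^ (w J₁) - Polynomial.C y)) :=
  stmt_12_general n D w hD J hJ hJmax hJcard C hC J₁ hJ₁ y hy
end

section
/- Let n₁, n₂ ≥ 1 and let E₁ ⊂ ℝ_{≥0}^{n₁} and E₂ ⊂ ℝ_{≥0}^{n₂} be finite non-empty sets of vectors with non-negative coordinates. Let P_i = conv(E_i) + ℝ_{≥0}^{n_i} (i = 1, 2) and let P = conv((E₁ × {0}) ∪ ({0} × E₂)) + ℝ_{≥0}^{n₁+n₂} ⊂ ℝ^{n₁+n₂}, where conv denotes the convex hull. Denote by 𝟙 the all-ones vector of the appropriate dimension. Then, as suprema in [0, ∞], sup{t > 0 : 𝟙 ∈ t·P} = sup{t > 0 : 𝟙 ∈ t·P₁} + sup{t > 0 : 𝟙 ∈ t·P₂}. -/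
/-!
Write `𝟙 ∈ t • (C + ℝ≥0ⁿ)` as `t • a ≤ 𝟙` for some `a ∈ C`. Since the hull of
`(E₁ × 0) ∪ (0 × E₂)` is the convex join of `conv E₁ × 0` and `0 × conv E₂`, a point of it is
`(μ a, ν b)` with `μ + ν = 1`, so an admissible scaling `t` of it splits as `tμ + tν` into admissible
scalings of `a` and `b`; conversely admissible `s₁, s₂` give the admissible `s₁ + s₂` with
`μ = s₁ / (s₁ + s₂)`. The set of admissible scalings of the join is therefore the Minkowski sum of
the two, and suprema add.
-/

open scoped Pointwise

/-- The "log canonical threshold" of a Newton-polyhedron-like set `P`, computed as the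
supremum, in `[0,∞]`, of the positive reals `t` with `𝟙 ∈ t • P`. -/
noncomputable def thr {V : Type*} [AddCommGroup V] [Module ℝ V]
    (one : V) (P : Set V) : ENNReal :=
  sSup (ENNReal.ofReal '' { t : ℝ | 0 < t ∧ one ∈ t • P })

section Scaling

variable {V W : Type*} [AddCommGroup V] [LE V] [Module ℝ V] [AddCommGroup W] [LE W] [Module ℝ W]

/-- Unlike in `thr`, the scaling `t = 0` is admitted: it does not change the supremum and makes
`scalingSet_convexJoin` an exact equality. -/
def scalingSet (one : V) (S : Set V) : Set ℝ := {t | 0 ≤ t ∧ ∃ a ∈ S, t • a ≤ one}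

lemma zero_mem_scalingSet {one : V} {S : Set V} (hone : 0 ≤ one) (hS : S.Nonempty) :
    (0 : ℝ) ∈ scalingSet one S :=
  ⟨le_rfl, hS.some, hS.some_mem, by rwa [zero_smul]⟩

lemma scalingSet_convexJoin (u : V) (w : W) (C₁ : Set V) (C₂ : Set W) :
    scalingSet (u, w) (convexJoin ℝ (C₁ ×ˢ {0}) ({0} ×ˢ C₂)) =
      scalingSet u C₁ + scalingSet w C₂ := by
  ext t
  simp only [scalingSet, mem_convexJoin, Set.mem_add, Set.mem_ofPred_eq]
  constructor
  · rintro ⟨ht, _, ⟨x, ⟨hx, hx0⟩, y, ⟨hy0, hy⟩, μ, ν, hμ, hν, hμν, rfl⟩, hle⟩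
    rw [Set.mem_singleton_iff] at hx0 hy0
    refine ⟨t * μ, ⟨by positivity, x.1, hx, ?_⟩, t * ν, ⟨by positivity, y.2, hy, ?_⟩, ?_⟩
    · simpa [hy0, mul_smul] using hle.1
    · simpa [hx0, mul_smul] using hle.2
    · rw [← mul_add, hμν, mul_one]
  · rintro ⟨s₁, ⟨hs₁, a, ha, ha'⟩, s₂, ⟨hs₂, b, hb, hb'⟩, rfl⟩
    obtain ⟨μ, ν, hμ, hν, hμν, h₁, h₂⟩ : ∃ μ ν : ℝ, 0 ≤ μ ∧ 0 ≤ ν ∧ μ + ν = 1 ∧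
        s₁ = (s₁ + s₂) * μ ∧ s₂ = (s₁ + s₂) * ν := by
      rcases (add_nonneg hs₁ hs₂).eq_or_lt with h | h
      · exact ⟨1, 0, zero_le_one, le_rfl, add_zero 1, by linarith, by linarith⟩
      · exact ⟨s₁ / (s₁ + s₂), s₂ / (s₁ + s₂), by positivity, by positivity, by field_simp,
          by field_simp, by field_simp⟩
    refine ⟨add_nonneg hs₁ hs₂, _,
      ⟨(a, 0), ⟨ha, rfl⟩, (0, b), ⟨rfl, hb⟩, μ, ν, hμ, hν, hμν, rfl⟩, ?_⟩
    rw [h₁, mul_smul] at ha'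
    rw [h₂, mul_smul] at hb'
    simpa [Prod.le_def] using ⟨ha', hb'⟩

end Scaling

section OrderedModule

variable {V : Type*} [AddCommGroup V] [PartialOrder V] [IsOrderedAddMonoid V] [Module ℝ V]
  [PosSMulMono ℝ V]

lemma mem_smul_add_Ici_zero_iff {one : V} {S : Set V} {t : ℝ} (ht : 0 < t) :
    one ∈ t • (S + Set.Ici 0) ↔ ∃ a ∈ S, t • a ≤ one := by
  constructor
  · rintro ⟨_, ⟨a, ha, q, hq, rfl⟩, rfl⟩
    refine ⟨a, ha, ?_⟩
    change t • a ≤ t • (a + q)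
    rw [smul_add]
    exact le_add_of_nonneg_right (smul_nonneg ht.le hq)
  · rintro ⟨a, ha, hle⟩
    refine ⟨a + (t⁻¹ • one - a), ⟨a, ha, _, ?_, rfl⟩, ?_⟩
    · exact sub_nonneg.2 ((le_inv_smul_iff_of_pos ht).2 hle)
    · simp [smul_inv_smul₀ ht.ne']

lemma thr_add_Ici_zero (one : V) (S : Set V) :
    thr one (S + Set.Ici 0) = ⨆ t ∈ scalingSet one S, ENNReal.ofReal t := by
  rw [thr, sSup_image]
  refine le_antisymm (iSup₂_le fun t ⟨ht, hmem⟩ => ?_) (iSup₂_le fun t ⟨ht, hS⟩ => ?_)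
  · exact le_biSup _ ⟨ht.le, (mem_smul_add_Ici_zero_iff ht).1 hmem⟩
  · rcases ht.eq_or_lt with rfl | ht
    · simp
    · exact le_biSup _ ⟨ht, (mem_smul_add_Ici_zero_iff ht).2 hS⟩

end OrderedModule

lemma biSup_ofReal_add {X Y : Set ℝ} (hX : X.Nonempty) (hY : Y.Nonempty)
    (hX₀ : ∀ x ∈ X, 0 ≤ x) (hY₀ : ∀ y ∈ Y, 0 ≤ y) :
    ⨆ t ∈ X + Y, ENNReal.ofReal t = (⨆ x ∈ X, ENNReal.ofReal x) + ⨆ y ∈ Y, ENNReal.ofReal y := by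
  refine le_antisymm (iSup₂_le ?_) (ENNReal.biSup_add_biSup_le hX hY fun x hx y hy => ?_)
  · rintro _ ⟨x, hx, y, hy, rfl⟩
    rw [ENNReal.ofReal_add (hX₀ x hx) (hY₀ y hy)]
    exact add_le_add (le_biSup _ hx) (le_biSup _ hy)
  · rw [← ENNReal.ofReal_add (hX₀ x hx) (hY₀ y hy)]
    exact le_biSup _ (Set.add_mem_add hx hy)

theorem stmt_13_general (n₁ n₂ : ℕ)
    (E₁ : Set (Fin n₁ → ℝ)) (E₂ : Set (Fin n₂ → ℝ))
    (hE₁ne : E₁.Nonempty) (hE₂ne : E₂.Nonempty) :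
    thr ((fun _ => 1, fun _ => 1) : (Fin n₁ → ℝ) × (Fin n₂ → ℝ))
        (convexHull ℝ ((E₁ ×ˢ ({0} : Set (Fin n₂ → ℝ))) ∪
            (({0} : Set (Fin n₁ → ℝ)) ×ˢ E₂)) +
          { p : (Fin n₁ → ℝ) × (Fin n₂ → ℝ) |
            (∀ i, 0 ≤ p.1 i) ∧ (∀ i, 0 ≤ p.2 i) }) =
      thr (fun _ => 1 : Fin n₁ → ℝ)
          (convexHull ℝ E₁ + { x : Fin n₁ → ℝ | ∀ i, 0 ≤ x i }) +
        thr (fun _ => 1 : Fin n₂ → ℝ)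
          (convexHull ℝ E₂ + { x : Fin n₂ → ℝ | ∀ i, 0 ≤ x i }) := by
  rw [convexHull_union (hE₁ne.prod (Set.singleton_nonempty 0))
      ((Set.singleton_nonempty 0).prod hE₂ne), convexHull_prod, convexHull_prod,
    convexHull_singleton, convexHull_singleton]
  change thr _ (_ + Set.Ici 0) = thr _ (_ + Set.Ici 0) + thr _ (_ + Set.Ici 0)
  rw [thr_add_Ici_zero, thr_add_Ici_zero, thr_add_Ici_zero, scalingSet_convexJoin]
  exact biSup_ofReal_add
    ⟨0, zero_mem_scalingSet (fun _ => zero_le_one) hE₁ne.convexHull⟩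
    ⟨0, zero_mem_scalingSet (fun _ => zero_le_one) hE₂ne.convexHull⟩
    (fun _ h => h.1) (fun _ h => h.1)

/-- The convex-geometric core of Proposition 2.16 (additivity of the log canonical
threshold over connected components): for finite non-empty sets `E₁ ⊂ ℝ_{≥0}^{n₁}`,
`E₂ ⊂ ℝ_{≥0}^{n₂}`, with Newton polyhedra `Pᵢ = conv(Eᵢ) + ℝ_{≥0}^{nᵢ}` and
`P = conv((E₁ × {0}) ∪ ({0} × E₂)) + ℝ_{≥0}^{n₁+n₂}`, one has
`sup{t > 0 : 𝟙 ∈ t·P} = sup{t > 0 : 𝟙 ∈ t·P₁} + sup{t > 0 : 𝟙 ∈ t·P₂}`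
as suprema in `[0,∞]`. -/
theorem stmt_13 (n₁ n₂ : ℕ) (hn₁ : 1 ≤ n₁) (hn₂ : 1 ≤ n₂)
    (E₁ : Set (Fin n₁ → ℝ)) (E₂ : Set (Fin n₂ → ℝ))
    (hE₁fin : E₁.Finite) (hE₂fin : E₂.Finite)
    (hE₁ne : E₁.Nonempty) (hE₂ne : E₂.Nonempty)
    (hE₁pos : ∀ v ∈ E₁, ∀ i, 0 ≤ v i) (hE₂pos : ∀ v ∈ E₂, ∀ i, 0 ≤ v i) :
    thr ((fun _ => 1, fun _ => 1) : (Fin n₁ → ℝ) × (Fin n₂ → ℝ))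
        (convexHull ℝ ((E₁ ×ˢ ({0} : Set (Fin n₂ → ℝ))) ∪
            (({0} : Set (Fin n₁ → ℝ)) ×ˢ E₂)) +
          { p : (Fin n₁ → ℝ) × (Fin n₂ → ℝ) |
            (∀ i, 0 ≤ p.1 i) ∧ (∀ i, 0 ≤ p.2 i) }) =
      thr (fun _ => 1 : Fin n₁ → ℝ)
          (convexHull ℝ E₁ + { x : Fin n₁ → ℝ | ∀ i, 0 ≤ x i }) +
        thr (fun _ => 1 : Fin n₂ → ℝ)
          (convexHull ℝ E₂ + { x : Fin n₂ → ℝ | ∀ i, 0 ≤ x i }) :=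
  stmt_13_general n₁ n₂ E₁ E₂ hE₁ne hE₂ne
end

section
/- Let n ≥ 1 and let E ⊂ ℝ_{≥0}^n be a finite non-empty set of vectors with non-negative coordinates. Let P = conv(E) + ℝ_{≥0}^n and Q = conv(E ∪ {𝟙}) + ℝ_{≥0}^n, where conv denotes the convex hull and 𝟙 = (1,…,1). Then, as suprema in [0, ∞], sup{t > 0 : 𝟙 ∈ t·Q} = max{1, sup{t > 0 : 𝟙 ∈ t·P}}. -/
/-!
Write `P = conv E + ℝ≥0ⁿ` and `Q = conv (E ∪ {e}) + ℝ≥0ⁿ`. Clearly `e ∈ Q` and `P ⊆ Q`. Conversely, if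
`e ∈ t • Q` with `t > 1`, then `t⁻¹ • e = a • e + b • z + w` with `z ∈ conv E`, `w ≥ 0`, `a + b = 1`, so
`b • z + w = (t⁻¹ - a) • e`; here `b > 0`, since `t⁻¹ • e ≥ e` is impossible for `e > 0`. When
`a < t⁻¹` this exhibits `e ∈ s • P` for `s = b / (t⁻¹ - a)`, and `s ≥ t` because `t ≥ 1`. When
`a ≥ t⁻¹` it forces `z ≤ 0`, whence `e ∈ t • P`.
-/

open scoped Pointwise

section Threshold

variable {V : Type*} [AddCommGroup V] [Module ℝ V] {e : V} {P Q : Set V}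

lemma ofReal_le_thr {t : ℝ} (ht : 0 < t) (h : e ∈ t • P) : ENNReal.ofReal t ≤ thr e P :=
  le_sSup ⟨t, ⟨ht, h⟩, rfl⟩

lemma thr_le_of_forall {c : ENNReal} (h : ∀ t, 0 < t → e ∈ t • P → ENNReal.ofReal t ≤ c) :
    thr e P ≤ c :=
  sSup_le <| by rintro _ ⟨t, ⟨ht, hP⟩, rfl⟩; exact h t ht hP

lemma thr_mono (h : P ⊆ Q) : thr e P ≤ thr e Q :=
  thr_le_of_forall fun _ ht hP => ofReal_le_thr ht (Set.smul_set_mono h hP)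

lemma one_le_thr (h : e ∈ P) : 1 ≤ thr e P := by
  simpa using ofReal_le_thr one_pos (by rwa [one_smul])

end Threshold

def newtonPolyhedron {V : Type*} [AddCommGroup V] [Preorder V] [Module ℝ V] (E : Set V) :
    Set V :=
  convexHull ℝ E + Set.Ici 0

section Ordered

variable {V : Type*} [AddCommGroup V] [PartialOrder V] [IsOrderedAddMonoid V] [Module ℝ V]
  [PosSMulMono ℝ V] {e w : V} {t : ℝ}

lemma inv_smul_ne_add_of_one_lt (he : 0 < e) (ht : 1 < t) (hw : 0 ≤ w) : t⁻¹ • e ≠ e + w := by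
  intro h
  have hw_eq : (t⁻¹ - 1) • e = w := by rw [sub_smul, h, one_smul, add_sub_cancel_left]
  have hneg : t⁻¹ - 1 < 0 := sub_neg.2 (inv_lt_one_of_one_lt₀ ht)
  have : e ≤ 0 := by
    rw [← smul_le_smul_iff_of_neg_left hneg, smul_zero, hw_eq]; exact hw
  exact this.not_gt he

lemma exists_le_mem_smul_newtonPolyhedron (he : 0 < e) {E : Set V} (ht : 1 < t)
    (h : e ∈ t • newtonPolyhedron (E ∪ {e})) : ∃ s, t ≤ s ∧ e ∈ s • newtonPolyhedron E := by
  have ht₀ : 0 < t := one_pos.trans ht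
  rw [Set.mem_smul_set_iff_inv_smul_mem₀ ht₀.ne'] at h
  obtain ⟨y, hy, w, hw : 0 ≤ w, hyw : y + w = t⁻¹ • e⟩ := h
  have hy_ne : y ≠ e := by
    rintro rfl
    exact inv_smul_ne_add_of_one_lt he ht hw hyw.symm
  rw [Set.union_singleton] at hy
  rcases E.eq_empty_or_nonempty with rfl | hE
  · rw [insert_empty_eq, convexHull_singleton] at hy
    exact absurd hy hy_ne
  rw [convexHull_insert hE] at hy
  obtain ⟨x, hx : x = e, z, hz, a, b, ha, hb, hab, rfl⟩ := mem_convexJoin.1 hy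
  subst x
  have hb₀ : 0 < b := by
    refine hb.lt_of_ne' fun hb₀ => hy_ne ?_
    rw [hb₀, zero_smul, add_zero, (by linarith : a = 1), one_smul]
  have hbalance : b • z + w = (t⁻¹ - a) • e := by
    rw [sub_smul, ← hyw, add_assoc, add_sub_cancel_left]
  rcases lt_or_ge a t⁻¹ with hau | hua
  · refine ⟨b / (t⁻¹ - a), ?_, ?_⟩
    · rw [le_div_iff₀ (sub_pos.2 hau), mul_sub, mul_inv_cancel₀ ht₀.ne']
      nlinarith
    · rw [Set.mem_smul_set_iff_inv_smul_mem₀ (div_pos hb₀ (sub_pos.2 hau)).ne']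
      refine ⟨z, hz, b⁻¹ • w, smul_nonneg (inv_nonneg.2 hb) hw, ?_⟩
      rw [inv_div, div_eq_inv_mul, mul_smul, ← hbalance, smul_add, inv_smul_smul₀ hb₀.ne']
  · refine ⟨t, le_rfl, ?_⟩
    have hz₀ : z ≤ 0 := by
      rw [← smul_nonpos_iff_nonpos_of_pos_left hb₀]
      calc b • z ≤ b • z + w := le_add_of_nonneg_right hw
        _ = (t⁻¹ - a) • e := hbalance
        _ ≤ 0 := smul_nonpos_of_nonpos_of_nonneg (sub_nonpos.2 hua) he.le
    rw [Set.mem_smul_set_iff_inv_smul_mem₀ ht₀.ne']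
    refine ⟨z, hz, t⁻¹ • e - z, ?_, add_sub_cancel _ _⟩
    exact sub_nonneg.2 (hz₀.trans (smul_nonneg (inv_nonneg.2 ht₀.le) he.le))

theorem thr_newtonPolyhedron_union_singleton (he : 0 < e) (E : Set V) :
    thr e (newtonPolyhedron (E ∪ {e})) = max 1 (thr e (newtonPolyhedron E)) := by
  refine le_antisymm (thr_le_of_forall fun t ht₀ h => ?_) (max_le ?_ ?_)
  · rcases le_or_gt t 1 with ht | ht
    · exact le_max_of_le_left (ENNReal.ofReal_le_one.2 ht)
    obtain ⟨s, hts, hs⟩ := exists_le_mem_smul_newtonPolyhedron he ht h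
    exact le_max_of_le_right
      ((ENNReal.ofReal_le_ofReal hts).trans (ofReal_le_thr (ht₀.trans_le hts) hs))
  · exact one_le_thr ⟨e, subset_convexHull ℝ _ (Or.inr rfl), 0, le_rfl, add_zero e⟩
  · exact thr_mono (Set.add_subset_add_right (convexHull_mono Set.subset_union_left))

end Ordered

theorem stmt_14_general (n : ℕ) (hn : 1 ≤ n) (E : Set (Fin n → ℝ)) :
    thr (fun _ => 1 : Fin n → ℝ)
        (convexHull ℝ (E ∪ {fun _ => 1}) + { x : Fin n → ℝ | ∀ i, 0 ≤ x i }) =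
      max 1
        (thr (fun _ => 1 : Fin n → ℝ)
          (convexHull ℝ E + { x : Fin n → ℝ | ∀ i, 0 ≤ x i })) :=
  have hone : (0 : Fin n → ℝ) < fun _ => 1 := Pi.lt_def.2 ⟨fun _ => zero_le_one, ⟨0, hn⟩, one_pos⟩
  thr_newtonPolyhedron_union_singleton hone E

/-- The convex-geometric core of Proposition 2.17: for a finite non-empty set
`E ⊂ ℝ_{≥0}^n` with Newton polyhedra `P = conv(E) + ℝ_{≥0}^n` and
`Q = conv(E ∪ {𝟙}) + ℝ_{≥0}^n`, one has
`sup{t > 0 : 𝟙 ∈ t·Q} = max{1, sup{t > 0 : 𝟙 ∈ t·P}}` as suprema in `[0,∞]`. -/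
theorem stmt_14 (n : ℕ) (hn : 1 ≤ n) (E : Set (Fin n → ℝ))
    (hEfin : E.Finite) (hEne : E.Nonempty) (hEpos : ∀ v ∈ E, ∀ i, 0 ≤ v i) :
    thr (fun _ => 1 : Fin n → ℝ)
        (convexHull ℝ (E ∪ {fun _ => 1}) + { x : Fin n → ℝ | ∀ i, 0 ≤ x i }) =
      max 1
        (thr (fun _ => 1 : Fin n → ℝ)
          (convexHull ℝ E + { x : Fin n → ℝ | ∀ i, 0 ≤ x i })) :=
  stmt_14_general n hn E
end

section
/- Let 𝔻 = (D, w) be an n-dimensional special datum. In the polynomial ring ℂ[x₁,…,xₙ], let E = {w(J)·χ_J : J ∈ D} ⊂ ℝ_{≥0}^n be the set of exponent vectors of the monomials x_J^{w(J)} (where χ_J is the indicator vector of J), and let P = conv(E) + ℝ_{≥0}^n. Then sup{t > 0 : (1,…,1) ∈ t·P} ≥ #{J ∈ D : J is a maximal element of D with respect to inclusion}. -/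
/-!
The maximal elements of a laminar family containing every singleton partition the ground set,
and they all have weight `1`. Hence the exponent vectors of the `m` maximal elements are the
indicator vectors of a partition and sum to `𝟙`, so their barycentre `𝟙 / m` lies in `conv(E) ⊆ P`,
i.e. `𝟙 ∈ m • P`.
-/

open Finset

open scoped Pointwise Classical

section Laminar

variable {α : Type*} [DecidableEq α] {D : Finset (Finset α)}
  [DecidablePred fun J => ∀ K ∈ D, J ⊆ K → J = K]

theorem existsUnique_maximal_mem
    (hlam : ∀ J ∈ D, ∀ J' ∈ D, J ⊆ J' ∨ J' ⊆ J ∨ J ∩ J' = ∅) {i : α} (hi : {i} ∈ D) :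
    ∃! J, J ∈ D.filter (fun J => ∀ K ∈ D, J ⊆ K → J = K) ∧ i ∈ J := by
  obtain ⟨J, hJ, hJlargest⟩ :=
    exists_max_image (D.filter (i ∈ ·)) card ⟨{i}, mem_filter.mpr ⟨hi, mem_singleton_self i⟩⟩
  rw [mem_filter] at hJ
  have hJmax : ∀ K ∈ D, J ⊆ K → J = K := by
    intro K hK hJK
    by_contra hne
    have := hJlargest K (mem_filter.mpr ⟨hK, hJK hJ.2⟩)
    exact (card_lt_card (ssubset_of_subset_of_ne hJK hne)).not_ge this
  refine ⟨J, ⟨mem_filter.mpr ⟨hJ.1, hJmax⟩, hJ.2⟩, ?_⟩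
  rintro J' ⟨hJ', hiJ'⟩
  rw [mem_filter] at hJ'
  rcases hlam J' hJ'.1 J hJ.1 with h | h | h
  · exact hJ'.2 J hJ.1 h
  · exact (hJmax J' hJ'.1 h).symm
  · exact absurd (mem_inter.mpr ⟨hiJ', hJ.2⟩) (by simp [h])

theorem sum_indicator_maximal_eq_one
    (hlam : ∀ J ∈ D, ∀ J' ∈ D, J ⊆ J' ∨ J' ⊆ J ∨ J ∩ J' = ∅) (hsingle : ∀ i, {i} ∈ D) :
    ∑ J ∈ D.filter (fun J => ∀ K ∈ D, J ⊆ K → J = K),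
      (fun i => if i ∈ J then (1 : ℝ) else 0) = fun _ => 1 := by
  funext i
  obtain ⟨J, ⟨hJ, hiJ⟩, huniq⟩ := existsUnique_maximal_mem hlam (hsingle i)
  rw [Finset.sum_apply, sum_eq_single_of_mem J hJ]
  · simp [hiJ]
  · intro K hK hKJ
    simp [show i ∉ K from fun hiK => hKJ (huniq K ⟨hK, hiK⟩)]

end Laminar

theorem sum_mem_card_smul_convexHull {ι V : Type*} [AddCommGroup V] [Module ℝ V]
    {s : Set V} {t : Finset ι} (ht : t.Nonempty) {z : ι → V} (hz : ∀ i ∈ t, z i ∈ s) :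
    ∑ i ∈ t, z i ∈ (#t : ℝ) • convexHull ℝ s := by
  have hcard : (#t : ℝ) ≠ 0 := by exact_mod_cast ht.card_pos.ne'
  have hcm := t.centerMass_mem_convexHull (w := fun _ => (1 : ℝ)) (fun _ _ => zero_le_one)
    (by simpa using ht.card_pos) hz
  simp only [centerMass, sum_const, nsmul_eq_mul, mul_one, one_smul] at hcm
  simpa [smul_smul, hcard] using Set.smul_mem_smul_set (a := (#t : ℝ)) hcm

theorem ofReal_le_thr_s15 {V : Type*} [AddCommGroup V] [Module ℝ V] {one : V} {P : Set V}
    {t : ℝ} (ht : 0 < t) (hone : one ∈ t • P) :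
    ENNReal.ofReal t ≤ thr one P :=
  le_sSup ⟨t, ⟨ht, hone⟩, rfl⟩

theorem stmt_15_general (n : ℕ) (D : Finset (Finset (Fin n)))
    (w : Finset (Fin n) → ℕ) (hD : IsSpecialDatum D w) :
    ((D.filter (fun J => ∀ K ∈ D, J ⊆ K → J = K)).card : ENNReal) ≤
      thr (fun _ => 1 : Fin n → ℝ)
        (convexHull ℝ
            { v : Fin n → ℝ | ∃ J ∈ D, v = fun i => if i ∈ J then (w J : ℝ) else 0 } +
          { x : Fin n → ℝ | ∀ i, 0 ≤ x i }) := by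
  set M := D.filter (fun J => ∀ K ∈ D, J ⊆ K → J = K)
  rcases M.eq_empty_or_nonempty with hM | hM
  · simp [hM]
  have hsum : ∑ J ∈ M, (fun i => if i ∈ J then (w J : ℝ) else 0) = fun _ => 1 := by
    rw [← sum_indicator_maximal_eq_one hD.laminar hD.singleton_mem]
    refine sum_congr rfl fun J hJ => ?_
    rw [mem_filter] at hJ
    simp [hD.w_max J hJ.1 hJ.2]
  have hone := sum_mem_card_smul_convexHull hM
    (s := { v : Fin n → ℝ | ∃ J ∈ D, v = fun i => if i ∈ J then (w J : ℝ) else 0 })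
    (fun J hJ => ⟨J, (mem_filter.mp hJ).1, rfl⟩)
  rw [hsum] at hone
  rw [← ENNReal.ofReal_natCast]
  exact ofReal_le_thr_s15 (by exact_mod_cast hM.card_pos)
    (Set.smul_set_mono (Set.subset_add_left _ (Set.mem_ofPred.mpr fun _ => le_rfl)) hone)

/-- Newton-polyhedron form of Corollary 2.18: for an `n`-dimensional special datum
`𝔻 = (D, w)` with exponent vectors `E = {w(J)·χ_J : J ∈ D}` and Newton polyhedron
`P = conv(E) + ℝ_{≥0}^n`, the threshold `sup{t > 0 : 𝟙 ∈ t·P}` (which equals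
`lct(𝔪_𝔻)`) is at least the number of maximal elements of `D`. -/
theorem stmt_15 (n : ℕ) (hn : 1 ≤ n) (D : Finset (Finset (Fin n)))
    (w : Finset (Fin n) → ℕ) (hD : IsSpecialDatum D w) :
    ((D.filter (fun J => ∀ K ∈ D, J ⊆ K → J = K)).card : ENNReal) ≤
      thr (fun _ => 1 : Fin n → ℝ)
        (convexHull ℝ
            { v : Fin n → ℝ | ∃ J ∈ D, v = fun i => if i ∈ J then (w J : ℝ) else 0 } +
          { x : Fin n → ℝ | ∀ i, 0 ≤ x i }) :=
  stmt_15_general n D w hD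
end

section
/- Let 𝔻 = (D, w) be an n-dimensional special datum, let R_𝔻 ⊆ ℂ[x₁,…,xₙ] be the ℂ-subalgebra generated by the monomials x_J^{w(J)} for J ∈ D (where x_J = ∏_{j∈J} x_j), and let 𝔪_𝔻 ⊆ R_𝔻 be the maximal ideal generated by these monomials. Then the dimension of 𝔪_𝔻/𝔪_𝔻² as a vector space over ℂ (equivalently, the embedding dimension of the local ring (R_𝔻)_{𝔪_𝔻}) is equal to |D| = n + #{J ∈ D : |J| ≥ 2}. -/
/-!
The generators `x_J^{w(J)}` of `𝔪_𝔻` are monomials `x^{v_J}` with `v_J = w(J) • 𝟙_J`. These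
exponents are nonzero and pairwise incomparable: `v_K ≤ v_J` forces `K ⊆ J`, and a strict
inclusion would give `w(K) > w(J)`. Every monomial occurring in an element of `𝔪_𝔻²` is divisible
by some `x^{v_J + v_K}`, so by incomparability no `x^{v_J}` occurs in it, and the classes of the
generators in `𝔪_𝔻/𝔪_𝔻²` are linearly independent. They span because `R_𝔻` acts on `𝔪_𝔻/𝔪_𝔻²`
through the constant coefficient `R_𝔻 → ℂ`, as `r - r(0) ∈ 𝔪_𝔻` for every `r ∈ R_𝔻`.
-/

open Finset

open MvPolynomial

set_option synthInstance.maxHeartbeats 1000000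
set_option maxHeartbeats 1000000

/-- The maximal ideal `𝔪_𝔻 ⊆ R_𝔻` generated by the monomials `x_K^{w(K)}`, `K ∈ D`. -/
noncomputable def datumIdeal (n : ℕ) (D : Finset (Finset (Fin n)))
    (w : Finset (Fin n) → ℕ) : Ideal (datumRing n D w) :=
  Ideal.span { f : datumRing n D w |
    ∃ K ∈ D, (f : MvPolynomial (Fin n) ℂ) = (∏ j ∈ K, X j) ^ (w K) }

open scoped Pointwise

section AdjoinIdeal

variable {k B : Type*} [CommRing k] [CommRing B] [Algebra k B] {T : Set B}

variable (k) in
def adjoinIdeal (T : Set B) : Ideal (Algebra.adjoin k T) :=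
  Ideal.span {f | (f : B) ∈ T}

def adjoinIdeal.gen {t : B} (ht : t ∈ T) : adjoinIdeal k T :=
  ⟨⟨t, Algebra.subset_adjoin ht⟩, Ideal.subset_span ht⟩

theorem quotient_mk_adjoinIdeal (φ : B →ₐ[k] k) (hφ : ∀ t ∈ T, φ t = 0)
    (r : Algebra.adjoin k T) :
    Ideal.Quotient.mk (adjoinIdeal k T) r = algebraMap k _ (φ r) := by
  obtain ⟨x, hx⟩ := r
  induction hx using Algebra.adjoin_induction with
  | mem x hx =>
    rw [hφ x hx, map_zero, Ideal.Quotient.eq_zero_iff_mem]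
    exact Ideal.subset_span hx
  | algebraMap c => rw [AlgHom.commutes]; rfl
  | add x y hx hy ihx ihy =>
    rw [show (⟨x + y, _⟩ : Algebra.adjoin k T) = ⟨x, hx⟩ + ⟨y, hy⟩ from rfl, map_add, ihx, ihy,
      ← map_add, ← map_add]
    rfl
  | mul x y hx hy ihx ihy =>
    rw [show (⟨x * y, _⟩ : Algebra.adjoin k T) = ⟨x, hx⟩ * ⟨y, hy⟩ from rfl, map_mul, ihx, ihy,
      ← map_mul, ← map_mul]
    rfl

theorem smul_adjoinIdeal_cotangent (φ : B →ₐ[k] k) (hφ : ∀ t ∈ T, φ t = 0)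
    (r : Algebra.adjoin k T) (c : (adjoinIdeal k T).Cotangent) : r • c = φ r • c := by
  have hr : r - algebraMap k _ (φ r) ∈ adjoinIdeal k T :=
    Ideal.Quotient.eq.mp (by rw [quotient_mk_adjoinIdeal φ hφ, Ideal.Quotient.mk_algebraMap])
  rw [← algebraMap_smul (Algebra.adjoin k T) (φ r) c, ← sub_eq_zero, ← sub_smul]
  exact Ideal.Cotangent.smul_eq_zero_of_mem hr c

theorem span_range_toCotangent_gen (φ : B →ₐ[k] k) (hφ : ∀ t ∈ T, φ t = 0) :
    Submodule.span k (Set.range fun t : T => (adjoinIdeal k T).toCotangent (adjoinIdeal.gen t.2))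
      = ⊤ := by
  set N := Submodule.span k
    (Set.range fun t : T => (adjoinIdeal k T).toCotangent (adjoinIdeal.gen t.2))
  rw [eq_top_iff]
  rintro c -
  obtain ⟨⟨x, hx⟩, rfl⟩ := (adjoinIdeal k T).toCotangent_surjective c
  induction hx using Submodule.span_induction with
  | mem x hx => exact Submodule.subset_span ⟨⟨x, hx⟩, rfl⟩
  | zero =>
    rw [show (⟨0, _⟩ : adjoinIdeal k T) = 0 from rfl, map_zero]
    exact N.zero_mem
  | add x y hx hy ihx ihy =>
    simpa only [show (⟨x + y, _⟩ : adjoinIdeal k T) = ⟨x, hx⟩ + ⟨y, hy⟩ from rfl, map_add]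
      using N.add_mem ihx ihy
  | smul r x hx ih =>
    rw [show (⟨r • x, _⟩ : adjoinIdeal k T) = r • ⟨x, hx⟩ from rfl, map_smul,
      smul_adjoinIdeal_cotangent φ hφ]
    exact N.smul_mem _ ih

theorem coe_mem_span_sq_of_mem_adjoinIdeal_sq {x : Algebra.adjoin k T}
    (hx : x ∈ adjoinIdeal k T ^ 2) : (x : B) ∈ Ideal.span T ^ 2 := by
  have hmap : (adjoinIdeal k T).map (Algebra.adjoin k T).val ≤ Ideal.span T := by
    rw [adjoinIdeal, Ideal.map_span]
    exact Ideal.span_mono (by rintro _ ⟨f, hf, rfl⟩; exact hf)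
  have := Ideal.mem_map_of_mem (Algebra.adjoin k T).val hx
  rw [Ideal.map_pow] at this
  exact Ideal.pow_right_mono hmap 2 this

end AdjoinIdeal

section Monomial

variable {σ R : Type*} [CommSemiring R]

theorem image_monomial_mul_image_monomial (S S' : Set (σ →₀ ℕ)) :
    ((fun s => monomial s (1 : R)) '' S) * ((fun s => monomial s (1 : R)) '' S') =
      (fun s => monomial s (1 : R)) '' (S + S') := by
  ext p
  simp only [Set.mem_mul, Set.mem_add, Set.mem_image]
  constructor
  · rintro ⟨_, ⟨a, ha, rfl⟩, _, ⟨b, hb, rfl⟩, rfl⟩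
    exact ⟨a + b, ⟨a, ha, b, hb, rfl⟩, by rw [monomial_mul, mul_one]⟩
  · rintro ⟨_, ⟨a, ha, b, hb, rfl⟩, rfl⟩
    exact ⟨_, ⟨a, ha, rfl⟩, _, ⟨b, hb, rfl⟩, by rw [monomial_mul, mul_one]⟩

theorem coeff_eq_zero_of_mem_span_monomial_sq {S : Set (σ →₀ ℕ)} (hS0 : 0 ∉ S)
    (hS : IsAntichain (· ≤ ·) S) {p : MvPolynomial σ R}
    (hp : p ∈ Ideal.span ((fun s => monomial s (1 : R)) '' S) ^ 2) {s : σ →₀ ℕ} (hs : s ∈ S) :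
    coeff s p = 0 := by
  rw [pow_two, Ideal.span_mul_span', image_monomial_mul_image_monomial,
    mem_ideal_span_monomial_image] at hp
  by_contra hps
  obtain ⟨_, ⟨a, ha, b, hb, rfl⟩, hab⟩ := hp s (mem_support_iff.mpr hps)
  obtain rfl : a = s := hS.eq ha hs (le_self_add.trans hab)
  rw [add_le_iff_nonpos_right, nonpos_iff_eq_zero] at hab
  exact hS0 (hab ▸ hb)

end Monomial

section MonomialSubalgebra

variable (k : Type*) {σ : Type*} [CommRing k]

noncomputable def monomialCotangent (S : Set (σ →₀ ℕ)) (s : S) :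
    (adjoinIdeal k ((fun s => monomial s (1 : k)) '' S)).Cotangent :=
  (adjoinIdeal k ((fun s => monomial s (1 : k)) '' S)).toCotangent
    (adjoinIdeal.gen (Set.mem_image_of_mem _ s.2))

variable {k}

theorem linearIndependent_monomialCotangent {S : Set (σ →₀ ℕ)} (hS0 : 0 ∉ S)
    (hS : IsAntichain (· ≤ ·) S) : LinearIndependent k (monomialCotangent k S) := by
  classical
  rw [linearIndependent_iff']
  intro F c hc s hs
  set x : adjoinIdeal k ((fun s => monomial s (1 : k)) '' S) :=
    ∑ i ∈ F, c i • adjoinIdeal.gen (Set.mem_image_of_mem _ i.2)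
  have hx : x.1 ∈ adjoinIdeal k ((fun s => monomial s (1 : k)) '' S) ^ 2 := by
    rw [← Ideal.toCotangent_eq_zero, ← hc, map_sum]
    simp only [LinearMap.map_smul_of_tower, monomialCotangent]
  have hcoe : (x.1 : MvPolynomial σ k) = ∑ i ∈ F, monomial (i : σ →₀ ℕ) (c i) := by
    simp [x, adjoinIdeal.gen, smul_monomial]
  have hmem : (x.1 : MvPolynomial σ k) ∈ Ideal.span ((fun s => monomial s (1 : k)) '' S) ^ 2 :=
    coe_mem_span_sq_of_mem_adjoinIdeal_sq hx
  have hcoeff : coeff (s : σ →₀ ℕ) (x.1 : MvPolynomial σ k) = 0 :=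
    coeff_eq_zero_of_mem_span_monomial_sq hS0 hS hmem s.2
  rwa [hcoe, coeff_sum, Finset.sum_eq_single s (fun i _ his => ?_) (absurd hs), coeff_monomial,
    if_pos rfl] at hcoeff
  rw [coeff_monomial, if_neg (Subtype.coe_injective.ne his)]

theorem span_range_monomialCotangent {S : Set (σ →₀ ℕ)} (hS0 : 0 ∉ S) :
    Submodule.span k (Set.range (monomialCotangent k S)) = ⊤ := by
  classical
  refine eq_top_iff.mpr <| (span_range_toCotangent_gen (aeval 0) ?_).ge.trans <|
    Submodule.span_mono ?_
  · rintro _ ⟨s, hs, rfl⟩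
    rw [aeval_zero, constantCoeff_monomial, if_neg (ne_of_mem_of_not_mem hs hS0), map_zero]
  · rintro _ ⟨⟨_, s, hs, rfl⟩, rfl⟩
    exact ⟨⟨s, hs⟩, rfl⟩

theorem finrank_cotangent_adjoinIdeal_monomial [Nontrivial k] {S : Finset (σ →₀ ℕ)}
    (hS0 : 0 ∉ S) (hS : IsAntichain (· ≤ ·) (S : Set (σ →₀ ℕ))) :
    Module.finrank k
      (adjoinIdeal k ((fun s => monomial s (1 : k)) '' (S : Set (σ →₀ ℕ)))).Cotangent =
      S.card := by
  have hS0' : 0 ∉ (S : Set (σ →₀ ℕ)) := by exact_mod_cast hS0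
  rw [Module.finrank_eq_card_basis (Module.Basis.mk (linearIndependent_monomialCotangent hS0' hS)
    (span_range_monomialCotangent hS0').ge)]
  simp

end MonomialSubalgebra

section Datum

variable {σ : Type*}

theorem pow_prod_X_eq_monomial {R : Type*} [CommSemiring R] (J : Finset σ) (e : ℕ) :
    (∏ j ∈ J, X j : MvPolynomial σ R) ^ e = monomial (∑ j ∈ J, Finsupp.single j e) 1 := by
  rw [monomial_sum_one, ← Finset.prod_pow]
  exact Finset.prod_congr rfl fun j _ => X_pow_eq_monomial

noncomputable def datumExponent (w : Finset σ → ℕ) (J : Finset σ) : σ →₀ ℕ :=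
  ∑ j ∈ J, Finsupp.single j (w J)

theorem datumExponent_apply [DecidableEq σ] (w : Finset σ → ℕ) (J : Finset σ) (i : σ) :
    datumExponent w J i = if i ∈ J then w J else 0 := by
  simp [datumExponent, Finsupp.finsetSum_apply, Finsupp.single_apply]

variable {n : ℕ} {D : Finset (Finset (Fin n))} {w : Finset (Fin n) → ℕ}

theorem IsSpecialDatum.datumExponent_ne_zero (hD : IsSpecialDatum D w) {J : Finset (Fin n)}
    (hJ : J ∈ D) : datumExponent w J ≠ 0 := by
  obtain ⟨i, hi⟩ := hD.nonempty_mem J hJ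
  refine fun h => (hD.w_pos J hJ).ne' ?_
  simpa [datumExponent_apply, hi] using DFunLike.congr_fun h i

theorem IsSpecialDatum.eq_of_datumExponent_le (hD : IsSpecialDatum D w) {J K : Finset (Fin n)}
    (hJ : J ∈ D) (hK : K ∈ D) (h : datumExponent w K ≤ datumExponent w J) : K = J := by
  have hKJ : K ⊆ J := fun i hi => by
    by_contra hiJ
    simpa [datumExponent_apply, hi, hiJ, (hD.w_pos K hK).ne'] using h i
  by_contra hne
  obtain ⟨i, hi⟩ := hD.nonempty_mem K hK
  have hle := h i
  rw [datumExponent_apply, datumExponent_apply, if_pos hi, if_pos (hKJ hi)] at hle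
  exact (hD.w_lt K hK J hJ (ssubset_of_subset_of_ne hKJ hne)).not_ge hle

theorem IsSpecialDatum.zero_notMem_image_datumExponent (hD : IsSpecialDatum D w) :
    0 ∉ D.image (datumExponent w) := by
  simpa using fun J hJ => hD.datumExponent_ne_zero hJ

theorem IsSpecialDatum.isAntichain_image_datumExponent (hD : IsSpecialDatum D w) :
    IsAntichain (· ≤ ·) (D.image (datumExponent w) : Set (Fin n →₀ ℕ)) := by
  rw [coe_image]
  rintro _ ⟨K, hK, rfl⟩ _ ⟨J, hJ, rfl⟩ hne hle
  exact hne (congrArg _ (hD.eq_of_datumExponent_le hJ hK hle))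

theorem IsSpecialDatum.injOn_datumExponent (hD : IsSpecialDatum D w) :
    Set.InjOn (datumExponent w) D := fun _ hK _ hJ h =>
  hD.eq_of_datumExponent_le hJ hK h.le

theorem datum_generators_eq_image_monomial :
    {p | ∃ K ∈ D, p = (∏ j ∈ K, X j : MvPolynomial (Fin n) ℂ) ^ (w K)} =
      (fun s => monomial s (1 : ℂ)) '' (D.image (datumExponent w) : Set (Fin n →₀ ℕ)) := by
  ext p
  simp [pow_prod_X_eq_monomial, datumExponent, eq_comm]

end Datum

theorem card_eq_add_card_filter_two_le_card {α : Type*} [Fintype α] {D : Finset (Finset α)}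
    (hD : ∀ J ∈ D, J.Nonempty) (hsingleton : ∀ i, {i} ∈ D) :
    D.card = Fintype.card α + (D.filter fun J => 2 ≤ J.card).card := by
  classical
  have hsmall : (D.filter fun J => ¬ 2 ≤ J.card) = univ.map ⟨singleton, singleton_injective⟩ := by
    ext J
    simp only [mem_filter, mem_map, mem_univ, true_and, Function.Embedding.coeFn_mk, not_le]
    constructor
    · rintro ⟨hJ, hcard⟩
      obtain ⟨i, rfl⟩ := card_eq_one.mp (show J.card = 1 by have := (hD J hJ).card_pos; omega)
      exact ⟨i, rfl⟩
    · rintro ⟨i, rfl⟩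
      exact ⟨hsingleton i, by simp⟩
  rw [← card_filter_add_card_filter_not (fun J => 2 ≤ J.card), hsmall, card_map, card_univ,
    add_comm]

theorem stmt_16_general (n : ℕ) (D : Finset (Finset (Fin n)))
    (w : Finset (Fin n) → ℕ) (hD : IsSpecialDatum D w) :
    Module.finrank ℂ (datumIdeal n D w).Cotangent = D.card ∧
      D.card = n + (D.filter (fun J => 2 ≤ J.card)).card := by
  refine ⟨?_, by simpa using card_eq_add_card_filter_two_le_card hD.nonempty_mem hD.singleton_mem⟩
  show Module.finrank ℂ (adjoinIdeal ℂ {p | ∃ K ∈ D, p = (∏ j ∈ K, X j) ^ (w K)}).Cotangent = _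
  rw [datum_generators_eq_image_monomial,
    finrank_cotangent_adjoinIdeal_monomial hD.zero_notMem_image_datumExponent
      hD.isAntichain_image_datumExponent,
    card_image_of_injOn hD.injOn_datumExponent]

/-- Proposition 2.8: for an `n`-dimensional special datum `𝔻 = (D, w)`, the dimension
of `𝔪_𝔻/𝔪_𝔻²` as a `ℂ`-vector space (the embedding dimension of the local ring
`(R_𝔻)_{𝔪_𝔻}`) equals `|D| = n + #{J ∈ D : |J| ≥ 2}`. -/
theorem stmt_16 (n : ℕ) (hn : 1 ≤ n) (D : Finset (Finset (Fin n)))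
    (w : Finset (Fin n) → ℕ) (hD : IsSpecialDatum D w) :
    Module.finrank ℂ (datumIdeal n D w).Cotangent = D.card ∧
      D.card = n + (D.filter (fun J => 2 ≤ J.card)).card :=
  stmt_16_general n D w hD
end
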